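/- arXiv:2401.04179 — 7 statements merged into one kernel-verified Lean document; each statement's English description precedes it below -/
import Mathlib

section
/- Let U₁ ≤ U₂ and V₁ ≤ V₂ be real numbers such that the closed rectangle [U₁,U₂] × [V₁,V₂] is contained in U, and let Ψ be a smooth fixed-mode solution of the Regge–Wheeler equation on U. Define E_u := ∫_{V₁}^{V₂} [ (∂ᵥΨ)² + V·Ψ² ](u, v̄) dv̄ for u ∈ [U₁,U₂] and Ē_v := ∫_{U₁}^{U₂} [ (∂ᵤΨ)² + V·Ψ² ](ū, v) dū for v ∈ [V₁,V₂]. Then E_{U₁} + Ē_{V₁} = E_{U₂} + Ē_{V₂}. (This is the fixed-angular-mode form of the T-energy conservation law for the Regge–Wheeler equation, Lemma 6.2.) -/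
open scoped ContDiff

noncomputable section

/-- Partial derivative with respect to the first (`u`) null coordinate. -/
def pdu (f : ℝ × ℝ → ℝ) : ℝ × ℝ → ℝ := fun p => deriv (fun x => f (x, p.2)) p.1

/-- Partial derivative with respect to the second (`v`) null coordinate. -/
def pdv (f : ℝ × ℝ → ℝ) : ℝ × ℝ → ℝ := fun p => deriv (fun y => f (p.1, y)) p.2

/-- `D = 1 - 2M/r`. -/
def Dfun (M : ℝ) (r : ℝ × ℝ → ℝ) : ℝ × ℝ → ℝ := fun p => 1 - 2 * M / r p

/-- The fixed-mode Regge–Wheeler potential `V = (D/r²)·(ℓ(ℓ+1) − 6M/r)`. -/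
def Vpot (M : ℝ) (r : ℝ × ℝ → ℝ) (ℓ : ℕ) : ℝ × ℝ → ℝ := fun p =>
  Dfun M r p / (r p) ^ 2 * (((ℓ * (ℓ + 1) : ℕ) : ℝ) - 6 * M / r p)

/-!
The energy densities `e = (∂ᵥΨ)² + VΨ²` and `ē = (∂ᵤΨ)² + VΨ²` satisfy `∂ᵤe + ∂ᵥē = 0`. By
symmetry of mixed partials and the equation `∂ᵤ∂ᵥΨ = -VΨ` the cross terms cancel, leaving
`(∂ᵤV + ∂ᵥV)Ψ²`, which vanishes because `V` is a function of `r` alone and `∂ᵤr + ∂ᵥr = 0`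
(`V` is invariant under the Killing field `T = ∂ᵤ + ∂ᵥ`). Green's theorem on the rectangle turns
this divergence identity into the balance of the four boundary fluxes.
-/

open Set MeasureTheory
open scoped Interval

section

variable {f f' Ψ V E F r : ℝ × ℝ → ℝ} {g : ℝ → ℝ} {p : ℝ × ℝ} {U : Set (ℝ × ℝ)} {a b c d : ℝ}

lemma hasDerivAt_pdu (hf : DifferentiableAt ℝ f p) :
    HasDerivAt (fun x => f (x, p.2)) (pdu f p) p.1 :=
  (hf.comp p.1 (by fun_prop : DifferentiableAt ℝ (fun x : ℝ => (x, p.2)) p.1)).hasDerivAt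

lemma hasDerivAt_pdv (hf : DifferentiableAt ℝ f p) :
    HasDerivAt (fun y => f (p.1, y)) (pdv f p) p.2 :=
  (hf.comp p.2 (by fun_prop : DifferentiableAt ℝ (fun y : ℝ => (p.1, y)) p.2)).hasDerivAt

lemma pdu_eq_fderiv (hf : DifferentiableAt ℝ f p) : pdu f p = fderiv ℝ f p (1, 0) :=
  (hf.hasFDerivAt.comp_hasDerivAt p.1 ((hasDerivAt_id _).prodMk (hasDerivAt_const _ _))).deriv

lemma pdv_eq_fderiv (hf : DifferentiableAt ℝ f p) : pdv f p = fderiv ℝ f p (0, 1) :=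
  (hf.hasFDerivAt.comp_hasDerivAt p.2 ((hasDerivAt_const _ _).prodMk (hasDerivAt_id _))).deriv

lemma pdu_congr (h : f =ᶠ[nhds p] f') : pdu f p = pdu f' p :=
  (h.comp_tendsto (by fun_prop : Continuous fun x : ℝ => (x, p.2)).continuousAt).deriv_eq

lemma pdv_congr (h : f =ᶠ[nhds p] f') : pdv f p = pdv f' p :=
  (h.comp_tendsto (by fun_prop : Continuous fun y : ℝ => (p.1, y)).continuousAt).deriv_eq

lemma pdu_comp (hg : DifferentiableAt ℝ g (r p)) (hr : DifferentiableAt ℝ r p) :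
    pdu (g ∘ r) p = deriv g (r p) * pdu r p :=
  (hg.hasDerivAt.comp p.1 (hasDerivAt_pdu hr)).deriv

lemma pdv_comp (hg : DifferentiableAt ℝ g (r p)) (hr : DifferentiableAt ℝ r p) :
    pdv (g ∘ r) p = deriv g (r p) * pdv r p :=
  (hg.hasDerivAt.comp p.2 (hasDerivAt_pdv hr)).deriv

lemma pdu_comp_add_pdv_comp_eq_zero (hg : DifferentiableAt ℝ g (r p))
    (hr : DifferentiableAt ℝ r p) (hT : pdu r p + pdv r p = 0) :
    pdu (g ∘ r) p + pdv (g ∘ r) p = 0 := by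
  rw [pdu_comp hg hr, pdv_comp hg hr, ← mul_add, hT, mul_zero]

lemma contDiffOn_pdu {m n : WithTop ℕ∞} (hU : IsOpen U) (hf : ContDiffOn ℝ n f U)
    (hmn : m + 1 ≤ n) : ContDiffOn ℝ m (pdu f) U :=
  ((hf.fderiv_of_isOpen hU hmn).clm_apply contDiffOn_const).congr fun _ hq =>
    pdu_eq_fderiv ((hf.differentiableOn fun h => by simp [h] at hmn).differentiableAt
      (hU.mem_nhds hq))

lemma contDiffOn_pdv {m n : WithTop ℕ∞} (hU : IsOpen U) (hf : ContDiffOn ℝ n f U)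
    (hmn : m + 1 ≤ n) : ContDiffOn ℝ m (pdv f) U :=
  ((hf.fderiv_of_isOpen hU hmn).clm_apply contDiffOn_const).congr fun _ hq =>
    pdv_eq_fderiv ((hf.differentiableOn fun h => by simp [h] at hmn).differentiableAt
      (hU.mem_nhds hq))

lemma fderiv_fderiv_apply {v w : ℝ × ℝ} (hf : DifferentiableAt ℝ (fderiv ℝ f) p) :
    fderiv ℝ (fun q => fderiv ℝ f q v) p w = fderiv ℝ (fderiv ℝ f) p w v := by
  rw [fderiv_clm_apply hf (differentiableAt_const v)]
  simp

lemma pdu_pdv_eq_fderiv_fderiv (hU : IsOpen U) (hf : ContDiffOn ℝ 2 f U) (hp : p ∈ U) :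
    pdu (pdv f) p = fderiv ℝ (fderiv ℝ f) p (1, 0) (0, 1) := by
  have hdf : DifferentiableAt ℝ (fderiv ℝ f) p :=
    ((hf.contDiffAt (hU.mem_nhds hp)).fderiv_right (m := 1) le_rfl).differentiableAt one_ne_zero
  have hpdv : pdv f =ᶠ[nhds p] fun q => fderiv ℝ f q (0, 1) :=
    Filter.eventuallyEq_of_mem (hU.mem_nhds hp) fun q hq =>
      pdv_eq_fderiv ((hf.differentiableOn two_ne_zero).differentiableAt (hU.mem_nhds hq))
  rw [pdu_congr hpdv, pdu_eq_fderiv (hdf.clm_apply (differentiableAt_const _)),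
    fderiv_fderiv_apply hdf]

lemma pdv_pdu_eq_fderiv_fderiv (hU : IsOpen U) (hf : ContDiffOn ℝ 2 f U) (hp : p ∈ U) :
    pdv (pdu f) p = fderiv ℝ (fderiv ℝ f) p (0, 1) (1, 0) := by
  have hdf : DifferentiableAt ℝ (fderiv ℝ f) p :=
    ((hf.contDiffAt (hU.mem_nhds hp)).fderiv_right (m := 1) le_rfl).differentiableAt one_ne_zero
  have hpdu : pdu f =ᶠ[nhds p] fun q => fderiv ℝ f q (1, 0) :=
    Filter.eventuallyEq_of_mem (hU.mem_nhds hp) fun q hq =>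
      pdu_eq_fderiv ((hf.differentiableOn two_ne_zero).differentiableAt (hU.mem_nhds hq))
  rw [pdv_congr hpdu, pdv_eq_fderiv (hdf.clm_apply (differentiableAt_const _)),
    fderiv_fderiv_apply hdf]

lemma pdv_pdu_comm (hU : IsOpen U) (hf : ContDiffOn ℝ 2 f U) (hp : p ∈ U) :
    pdv (pdu f) p = pdu (pdv f) p := by
  rw [pdu_pdv_eq_fderiv_fderiv hU hf hp, pdv_pdu_eq_fderiv_fderiv hU hf hp]
  exact (hf.contDiffAt (hU.mem_nhds hp)).isSymmSndFDerivAt (by simp) _ _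

theorem integral_boundary_eq_of_pdu_add_pdv_eq_zero
    (hE : ∀ p ∈ [[a, b]] ×ˢ [[c, d]], DifferentiableAt ℝ E p)
    (hF : ∀ p ∈ [[a, b]] ×ˢ [[c, d]], DifferentiableAt ℝ F p)
    (hdiv : ∀ p ∈ [[a, b]] ×ˢ [[c, d]], pdu E p + pdv F p = 0) :
    (∫ v in c..d, E (a, v)) + ∫ u in a..b, F (u, c)
      = (∫ v in c..d, E (b, v)) + ∫ u in a..b, F (u, d) := by
  have hdiv' :
      EqOn (fun p => fderiv ℝ E p (1, 0) + fderiv ℝ F p (0, 1)) 0 ([[a, b]] ×ˢ [[c, d]]) :=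
    fun p hp => by
      change fderiv ℝ E p (1, 0) + fderiv ℝ F p (0, 1) = 0
      rw [← pdu_eq_fderiv (hE p hp), ← pdv_eq_fderiv (hF p hp), hdiv p hp]
  have hinterior : Ioo (min a b) (max a b) ×ˢ Ioo (min c d) (max c d) ⊆ [[a, b]] ×ˢ [[c, d]] :=
    prod_mono Ioo_subset_Icc_self Ioo_subset_Icc_self
  have hgreen := integral2_divergence_prod_of_hasFDerivAt E F (fderiv ℝ E) (fderiv ℝ F) a c b d
    (fun p hp => (hE p hp).continuousAt.continuousWithinAt)
    (fun p hp => (hF p hp).continuousAt.continuousWithinAt)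
    (fun p hp => (hE p (hinterior hp)).hasFDerivAt)
    (fun p hp => (hF p (hinterior hp)).hasFDerivAt)
    (integrableOn_zero.congr_fun hdiv'.symm (measurableSet_uIcc.prod measurableSet_uIcc))
  have hzero : (∫ u in a..b, ∫ v in c..d, fderiv ℝ E (u, v) (1, 0) + fderiv ℝ F (u, v) (0, 1))
      = 0 := by
    refine (intervalIntegral.integral_congr fun u hu => ?_).trans intervalIntegral.integral_zero
    exact (intervalIntegral.integral_congr fun v hv => hdiv' ⟨hu, hv⟩).trans
      intervalIntegral.integral_zero
  linarith

def energyDensityU (V Ψ : ℝ × ℝ → ℝ) : ℝ × ℝ → ℝ := fun q => pdu Ψ q ^ 2 + V q * Ψ q ^ 2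

def energyDensityV (V Ψ : ℝ × ℝ → ℝ) : ℝ × ℝ → ℝ := fun q => pdv Ψ q ^ 2 + V q * Ψ q ^ 2

lemma differentiableOn_energyDensityU (hU : IsOpen U) (hΨ : ContDiffOn ℝ 2 Ψ U)
    (hV : DifferentiableOn ℝ V U) :
    DifferentiableOn ℝ (energyDensityU V Ψ) U :=
  (((contDiffOn_pdu hU hΨ (m := 1) (by norm_num)).differentiableOn one_ne_zero).pow 2).add
    (hV.mul ((hΨ.differentiableOn two_ne_zero).pow 2))

lemma differentiableOn_energyDensityV (hU : IsOpen U) (hΨ : ContDiffOn ℝ 2 Ψ U)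
    (hV : DifferentiableOn ℝ V U) :
    DifferentiableOn ℝ (energyDensityV V Ψ) U :=
  (((contDiffOn_pdv hU hΨ (m := 1) (by norm_num)).differentiableOn one_ne_zero).pow 2).add
    (hV.mul ((hΨ.differentiableOn two_ne_zero).pow 2))

lemma pdu_energyDensityV_add_pdv_energyDensityU_eq_zero (hU : IsOpen U)
    (hΨ : ContDiffOn ℝ 2 Ψ U) (hV : DifferentiableOn ℝ V U) (hp : p ∈ U)
    (hwave : pdu (pdv Ψ) p + V p * Ψ p = 0) (hVT : pdu V p + pdv V p = 0) :
    pdu (energyDensityV V Ψ) p + pdv (energyDensityU V Ψ) p = 0 := by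
  have hUp := hU.mem_nhds hp
  have hΨp := (hΨ.differentiableOn two_ne_zero).differentiableAt hUp
  have hVp := hV.differentiableAt hUp
  have huΨ := ((contDiffOn_pdu hU hΨ (m := 1) (by norm_num)).differentiableOn
    one_ne_zero).differentiableAt hUp
  have hvΨ := ((contDiffOn_pdv hU hΨ (m := 1) (by norm_num)).differentiableOn
    one_ne_zero).differentiableAt hUp
  have hEu : HasDerivAt (fun x => energyDensityV V Ψ (x, p.2)) _ p.1 :=
    ((hasDerivAt_pdu hvΨ).pow 2).add ((hasDerivAt_pdu hVp).mul ((hasDerivAt_pdu hΨp).pow 2))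
  have hFv : HasDerivAt (fun y => energyDensityU V Ψ (p.1, y)) _ p.2 :=
    ((hasDerivAt_pdv huΨ).pow 2).add ((hasDerivAt_pdv hVp).mul ((hasDerivAt_pdv hΨp).pow 2))
  rw [pdu, pdv, hEu.deriv, hFv.deriv, pdv_pdu_comm hU hΨ hp]
  linear_combination (2 * pdv Ψ p + 2 * pdu Ψ p) * hwave + Ψ p ^ 2 * hVT

theorem integral_energyDensity_boundary_eq (hU : IsOpen U) (hΨ : ContDiffOn ℝ 2 Ψ U)
    (hV : DifferentiableOn ℝ V U) (hrect : [[a, b]] ×ˢ [[c, d]] ⊆ U)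
    (hwave : ∀ p ∈ U, pdu (pdv Ψ) p + V p * Ψ p = 0)
    (hVT : ∀ p ∈ U, pdu V p + pdv V p = 0) :
    (∫ v in c..d, energyDensityV V Ψ (a, v)) + ∫ u in a..b, energyDensityU V Ψ (u, c)
      = (∫ v in c..d, energyDensityV V Ψ (b, v)) + ∫ u in a..b, energyDensityU V Ψ (u, d) :=
  integral_boundary_eq_of_pdu_add_pdv_eq_zero
    (fun _ hp => (differentiableOn_energyDensityV hU hΨ hV).differentiableAt
      (hU.mem_nhds (hrect hp)))
    (fun _ hp => (differentiableOn_energyDensityU hU hΨ hV).differentiableAt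
      (hU.mem_nhds (hrect hp)))
    (fun p hp => pdu_energyDensityV_add_pdv_energyDensityU_eq_zero hU hΨ hV (hrect hp)
      (hwave p (hrect hp)) (hVT p (hrect hp)))

end

theorem regge_wheeler_energy_conservation_general
    (M : ℝ) (hM : 0 ≤ M)
    (U : Set (ℝ × ℝ)) (hUopen : IsOpen U)
    (r : ℝ × ℝ → ℝ) (hr : ContDiffOn ℝ ∞ r U)
    (hr2M : ∀ p ∈ U, 2 * M < r p)
    (hru : ∀ p ∈ U, pdu r p = -(1 - 2 * M / r p))
    (hrv : ∀ p ∈ U, pdv r p = 1 - 2 * M / r p)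
    (ℓ : ℕ)
    (U₁ U₂ V₁ V₂ : ℝ) (hU12 : U₁ ≤ U₂) (hV12 : V₁ ≤ V₂)
    (hrect : Set.Icc U₁ U₂ ×ˢ Set.Icc V₁ V₂ ⊆ U)
    (Ψ : ℝ × ℝ → ℝ) (hΨ : ContDiffOn ℝ ∞ Ψ U)
    (hRW : ∀ p ∈ U,
      pdu (pdv Ψ) p + Dfun M r p / (r p) ^ 2 * ((ℓ * (ℓ + 1) : ℕ) : ℝ) * Ψ p
        - 6 * M * Dfun M r p / (r p) ^ 3 * Ψ p = 0) :
    (∫ v in V₁..V₂, ((pdv Ψ (U₁, v)) ^ 2 + Vpot M r ℓ (U₁, v) * (Ψ (U₁, v)) ^ 2)) +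
        (∫ u in U₁..U₂, ((pdu Ψ (u, V₁)) ^ 2 + Vpot M r ℓ (u, V₁) * (Ψ (u, V₁)) ^ 2)) =
      (∫ v in V₁..V₂, ((pdv Ψ (U₂, v)) ^ 2 + Vpot M r ℓ (U₂, v) * (Ψ (U₂, v)) ^ 2)) +
        (∫ u in U₁..U₂, ((pdu Ψ (u, V₂)) ^ 2 + Vpot M r ℓ (u, V₂) * (Ψ (u, V₂)) ^ 2)) := by
  have hr0 : ∀ p ∈ U, r p ≠ 0 := fun p hp => (show 0 < r p by linarith [hr2M p hp]).ne'
  have hrd : ∀ p ∈ U, DifferentiableAt ℝ r p := fun p hp =>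
    (hr.differentiableOn (by simp)).differentiableAt (hUopen.mem_nhds hp)
  -- `Vpot M r ℓ` is definitionally `g ∘ r`.
  set g : ℝ → ℝ := fun s => (1 - 2 * M / s) / s ^ 2 * (((ℓ * (ℓ + 1) : ℕ) : ℝ) - 6 * M / s)
  have hgd : ∀ p ∈ U, DifferentiableAt ℝ g (r p) := fun p hp => by
    have := hr0 p hp
    fun_prop (disch := simp [this])
  have hV : DifferentiableOn ℝ (Vpot M r ℓ) U := fun p hp =>
    ((hgd p hp).comp p (hrd p hp)).differentiableWithinAt
  have hVT : ∀ p ∈ U, pdu (Vpot M r ℓ) p + pdv (Vpot M r ℓ) p = 0 := fun p hp =>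
    pdu_comp_add_pdv_comp_eq_zero (hgd p hp) (hrd p hp) (by rw [hru p hp, hrv p hp]; ring)
  have hwave : ∀ p ∈ U, pdu (pdv Ψ) p + Vpot M r ℓ p * Ψ p = 0 := fun p hp => by
    have h := hRW p hp
    simp only [Vpot, Dfun] at h ⊢
    linear_combination h
  rw [← uIcc_of_le hU12, ← uIcc_of_le hV12] at hrect
  exact integral_energyDensity_boundary_eq hUopen (hΨ.of_le (WithTop.coe_le_coe.2 le_top)) hV
    hrect hwave hVT

/-- `T`-energy conservation for the fixed-angular-mode Regge–Wheeler equation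
(Lemma 6.2, fixed-angular-mode form). -/
theorem regge_wheeler_energy_conservation
    (M : ℝ) (hM : 0 ≤ M)
    (U : Set (ℝ × ℝ)) (hUopen : IsOpen U)
    (r : ℝ × ℝ → ℝ) (hr : ContDiffOn ℝ ∞ r U)
    (hr2M : ∀ p ∈ U, 2 * M < r p)
    (hru : ∀ p ∈ U, pdu r p = -(1 - 2 * M / r p))
    (hrv : ∀ p ∈ U, pdv r p = 1 - 2 * M / r p)
    (ℓ : ℕ) (hℓ : 2 ≤ ℓ)
    (U₁ U₂ V₁ V₂ : ℝ) (hU12 : U₁ ≤ U₂) (hV12 : V₁ ≤ V₂)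
    (hrect : Set.Icc U₁ U₂ ×ˢ Set.Icc V₁ V₂ ⊆ U)
    (Ψ : ℝ × ℝ → ℝ) (hΨ : ContDiffOn ℝ ∞ Ψ U)
    (hRW : ∀ p ∈ U,
      pdu (pdv Ψ) p + Dfun M r p / (r p) ^ 2 * ((ℓ * (ℓ + 1) : ℕ) : ℝ) * Ψ p
        - 6 * M * Dfun M r p / (r p) ^ 3 * Ψ p = 0) :
    (∫ v in V₁..V₂, ((pdv Ψ (U₁, v)) ^ 2 + Vpot M r ℓ (U₁, v) * (Ψ (U₁, v)) ^ 2)) +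
        (∫ u in U₁..U₂, ((pdu Ψ (u, V₁)) ^ 2 + Vpot M r ℓ (u, V₁) * (Ψ (u, V₁)) ^ 2)) =
      (∫ v in V₁..V₂, ((pdv Ψ (U₂, v)) ^ 2 + Vpot M r ℓ (U₂, v) * (Ψ (U₂, v)) ^ 2)) +
        (∫ u in U₁..U₂, ((pdu Ψ (u, V₂)) ^ 2 + Vpot M r ℓ (u, V₂) * (Ψ (u, V₂)) ^ 2)) :=
  regge_wheeler_energy_conservation_general M hM U hUopen r hr hr2M hru hrv ℓ U₁ U₂ V₁ V₂ hU12 hV12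
    hrect Ψ hΨ hRW
end
end

section
/- Let p ∈ ℕ with p ≤ ℓ and let S₀, …, S_{ℓ−s} be real numbers. The function α(r₀, r) := r₀^(s−p) · Σ_{n=0}^{ℓ−s} S_n · (r₀/r)^n solves the flat (M = 0) fixed-mode spin-s Teukolsky equation on Ω if and only if for every 0 ≤ n ≤ ℓ−s one has S_n = S_{ℓ−s} · ( (−1)^(ℓ−s+n) · (ℓ−s)! · (ℓ−p)! / (2ℓ)! ) · ( (ℓ+s+n)! / ( n! · (s−p+n)! · (ℓ−s−n)! ) ), where 1/(s−p+n)! is interpreted as 0 when s−p+n < 0. Moreover, for any coefficients, ( (r²∂_r)^(ℓ−s) α )(r₀, r) = (−1)^(ℓ−s) · (ℓ−s)! · S_{ℓ−s} · r₀^(ℓ−p). (Proposition 13.1.) -/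
noncomputable section

/-- Partial derivative with respect to the first (`r₀`) coordinate. -/
def pd1 (f : ℝ × ℝ → ℝ) : ℝ × ℝ → ℝ := fun p => deriv (fun x => f (x, p.2)) p.1

/-- Partial derivative with respect to the second (`r`) coordinate. -/
def pd2 (f : ℝ × ℝ → ℝ) : ℝ × ℝ → ℝ := fun p => deriv (fun y => f (p.1, y)) p.2

/-- The region `Ω = {(r₀, r) : 0 < r₀ < r}`. -/
def OmegaSet : Set (ℝ × ℝ) := {q | 0 < q.1 ∧ q.1 < q.2}

/-- Factorial of a (nonnegative) integer, as a real number. -/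
def zfactR (n : ℤ) : ℝ := (Nat.factorial n.toNat : ℝ)

/-- The reciprocal factorial `1/n!`, interpreted as `0` for negative integers `n`. -/
def invZfact (n : ℤ) : ℝ := if 0 ≤ n then ((Nat.factorial n.toNat : ℝ))⁻¹ else 0

/-- `α` solves the flat (`M = 0`) fixed-mode spin-`s` Teukolsky equation
`−(∂_{r₀} + ∂_r)(r^(−2s) ∂_r α) = Λ r^(−2−2s) α` on `Ω`, with `Λ = −(ℓ−s)(ℓ+s+1)`. -/
def FlatTeuk (s ℓ : ℤ) (α : ℝ × ℝ → ℝ) : Prop :=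
  ∀ q ∈ OmegaSet,
    -(pd1 (fun x => x.2 ^ (-(2 * s)) * pd2 α x) q
        + pd2 (fun x => x.2 ^ (-(2 * s)) * pd2 α x) q) =
      ((-(ℓ - s) * (ℓ + s + 1) : ℤ) : ℝ) * q.2 ^ (-2 - 2 * s) * α q

/-- The operator `r²∂_r`. -/
def r2dr (f : ℝ × ℝ → ℝ) : ℝ × ℝ → ℝ := fun q => q.2 ^ 2 * pd2 f q

/-! Writing `(r₀ / r)^n = r₀^n r^(-n)`, the ansatz is the finite Laurent sum `Σ Sₙ r₀^(s-p+n) r^(-n)`,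
on which `∂_{r₀}`, `∂_r` and multiplication by powers of `r` act termwise. The Teukolsky operator maps it to a
sum of the same shape whose `n`-th coefficient is `(n+1)(s-p+n+1) S_{n+1} + (ℓ-s-n)(ℓ+s+n+1) Sₙ`. Since these
monomials are linearly independent on `Ω`, the equation is equivalent to this two-term recurrence, which
determines every `Sₙ` from `S_{ℓ-s}` because `ℓ-s-n` and `ℓ+s+n+1` never vanish for `n < ℓ-s`; the stated
closed form satisfies it. Each application of `r²∂_r` multiplies the `n`-th term by one more factor of
`(-n)(-n+1)⋯`, so after `ℓ-s` steps only the top term survives. -/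

open Finset Set

lemma zfactR_pos (n : ℤ) : 0 < zfactR n := by
  unfold zfactR; exact_mod_cast Nat.factorial_pos n.toNat

lemma zfactR_add_one {m : ℤ} (hm : 0 ≤ m) : zfactR (m + 1) = (m + 1) * zfactR m := by
  obtain ⟨k, rfl⟩ := Int.eq_ofNat_of_zero_le hm
  simp [zfactR, show ((k : ℤ) + 1).toNat = k + 1 by omega, Nat.factorial_succ]

lemma invZfact_eq_mul_invZfact_add_one (m : ℤ) : invZfact m = (m + 1) * invZfact (m + 1) := by
  rcases lt_trichotomy m (-1) with hm | rfl | hm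
  · simp [invZfact, show ¬0 ≤ m by omega, show ¬0 ≤ m + 1 by omega]
  · simp [invZfact]
  · have h := zfactR_add_one (show 0 ≤ m by omega)
    simp only [zfactR] at h
    rw [invZfact, invZfact, if_pos (by omega), if_pos (by omega), h, mul_inv,
      ← mul_assoc, mul_inv_cancel₀ (by exact_mod_cast (show m + 1 ≠ 0 by omega)), one_mul]

lemma recurrence_iff_eq_mul_of_last {N : ℕ} {u d Φ : ℕ → ℝ} (hd : ∀ n < N, d n ≠ 0)
    (hΦ : ∀ n < N, u n * Φ (n + 1) + d n * Φ n = 0) (hΦN : Φ N = 1) (S : ℕ → ℝ) :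
    (∀ n < N, u n * S (n + 1) + d n * S n = 0) ↔ ∀ n ≤ N, S n = S N * Φ n := by
  constructor
  · intro hS n hn
    induction hn using Nat.decreasingInduction with
    | self => rw [hΦN, mul_one]
    | of_succ n hn ih =>
      refine mul_left_cancel₀ (hd n hn) ?_
      linear_combination hS n hn - u n * ih - S N * hΦ n hn
  · intro hS n hn
    rw [hS n hn.le, hS (n + 1) hn]
    linear_combination S N * hΦ n hn

def teukCoeff (s ℓ : ℤ) (p n : ℕ) : ℝ :=
  ((-1 : ℝ) ^ (ℓ - s + (n : ℤ)) * zfactR (ℓ - s) * zfactR (ℓ - (p : ℤ)) / zfactR (2 * ℓ)) *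
    (zfactR (ℓ + s + (n : ℤ)) * invZfact (s - (p : ℤ) + (n : ℤ)) /
      (zfactR (n : ℤ) * zfactR (ℓ - s - (n : ℤ))))

lemma teukCoeff_self {s ℓ : ℤ} {p N : ℕ} (hN : (N : ℤ) = ℓ - s) (hp : (p : ℤ) ≤ ℓ) :
    teukCoeff s ℓ p N = 1 := by
  have hsign : (-1 : ℝ) ^ (ℓ - s + (N : ℤ)) = 1 := by
    rw [← hN, ← two_mul, zpow_mul]; norm_num
  rw [teukCoeff, hsign, show ℓ + s + (N : ℤ) = 2 * ℓ by omega, show s - p + (N : ℤ) = ℓ - p by omega,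
    show ℓ - s - (N : ℤ) = 0 by omega, hN, invZfact, if_pos (by omega)]
  have := zfactR_pos (ℓ - s); have := zfactR_pos (ℓ - p); have := zfactR_pos (2 * ℓ)
  simp only [zfactR] at *
  field_simp
  simp

lemma teukRecurrence_coeff_ne_zero {s ℓ : ℤ} {n : ℕ} (hls : 0 ≤ ℓ + s) (hn : (n : ℤ) < ℓ - s) :
    ((ℓ : ℝ) - s - n) * ((ℓ : ℝ) + s + n + 1) ≠ 0 := by
  have : ((ℓ - s - n) * (ℓ + s + n + 1) : ℤ) ≠ 0 := mul_ne_zero (by omega) (by omega)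
  exact_mod_cast this

lemma teukCoeff_recurrence {s ℓ : ℤ} (p : ℕ) {n : ℕ} (hls : 0 ≤ ℓ + s) (hn : (n : ℤ) < ℓ - s) :
    ((n : ℝ) + 1) * (((s - p : ℤ) : ℝ) + n + 1) * teukCoeff s ℓ p (n + 1) +
      ((ℓ : ℝ) - s - n) * ((ℓ : ℝ) + s + n + 1) * teukCoeff s ℓ p n = 0 := by
  have hsum : zfactR (ℓ + s + n + 1) = ((ℓ : ℝ) + s + n + 1) * zfactR (ℓ + s + n) := by
    rw [zfactR_add_one (by omega)]; push_cast; ring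
  have hnat : zfactR (n + 1) = ((n : ℝ) + 1) * zfactR n := by
    rw [zfactR_add_one (by omega)]; push_cast; ring
  have hdiff : zfactR (ℓ - s - n) = ((ℓ : ℝ) - s - n) * zfactR (ℓ - s - (n + 1)) := by
    rw [show ℓ - s - n = ℓ - s - (n + 1) + 1 by ring, zfactR_add_one (by omega)]; push_cast; ring
  have hinv : invZfact (s - p + n) = (((s - p : ℤ) : ℝ) + n + 1) * invZfact (s - p + n + 1) := by
    rw [invZfact_eq_mul_invZfact_add_one]; push_cast; ring
  have hd := left_ne_zero_of_mul (teukRecurrence_coeff_ne_zero hls hn)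
  have := zfactR_pos (ℓ - s - (n + 1)); have := zfactR_pos n; have := zfactR_pos (2 * ℓ)
  simp only [teukCoeff, Nat.cast_add_one, ← add_assoc, hsum, hnat, hdiff, hinv,
    zpow_add_one₀ (show (-1 : ℝ) ≠ 0 by norm_num)]
  field_simp
  ring

def laurentSum (a b : ℤ) (m : ℕ) (c : ℕ → ℝ) (x : ℝ × ℝ) : ℝ :=
  ∑ n ∈ range m, c n * x.1 ^ (a + n) * x.2 ^ (b - n)

def offAxes : Set (ℝ × ℝ) := {x | x.1 ≠ 0 ∧ x.2 ≠ 0}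

lemma OmegaSet_subset_offAxes : OmegaSet ⊆ offAxes :=
  fun _ hq => ⟨hq.1.ne', (hq.1.trans hq.2).ne'⟩

section laurentSum

variable {a b : ℤ} {m : ℕ} {c d : ℕ → ℝ}

lemma laurentSum_succ_of_first_eq_zero (hc : c 0 = 0) :
    laurentSum (a - 1) b (m + 1) c = laurentSum a (b - 1) m (fun n => c (n + 1)) := by
  ext x
  simp only [laurentSum, sum_range_succ', hc, zero_mul, add_zero]
  refine sum_congr rfl fun n _ => ?_
  push_cast
  ring_nf

lemma laurentSum_succ_of_last_eq_zero (hc : c m = 0) :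
    laurentSum a b (m + 1) c = laurentSum a b m c := by
  ext x
  simp [laurentSum, sum_range_succ, hc]

lemma laurentSum_add (x : ℝ × ℝ) :
    laurentSum a b m c x + laurentSum a b m d x = laurentSum a b m (fun n => c n + d n) x := by
  simp only [laurentSum, ← sum_add_distrib, add_mul]

lemma neg_laurentSum (x : ℝ × ℝ) :
    -laurentSum a b m c x = laurentSum a b m (fun n => -c n) x := by
  simp only [laurentSum, ← sum_neg_distrib, neg_mul]

lemma mul_laurentSum (t : ℝ) (x : ℝ × ℝ) :
    t * laurentSum a b m c x = laurentSum a b m (fun n => t * c n) x := by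
  simp only [laurentSum, mul_sum, mul_assoc]

lemma zpow_mul_laurentSum (k : ℤ) {x : ℝ × ℝ} (hx : x.2 ≠ 0) :
    x.2 ^ k * laurentSum a b m c x = laurentSum a (b + k) m c x := by
  simp only [laurentSum, mul_sum]
  refine sum_congr rfl fun n _ => ?_
  rw [show b + k - n = k + (b - n) by ring, zpow_add₀ hx]
  ring

lemma pd1_laurentSum {x : ℝ × ℝ} (hx : x.1 ≠ 0) :
    pd1 (laurentSum a b m c) x = laurentSum (a - 1) b m (fun n => (a + n : ℝ) * c n) x := by
  refine HasDerivAt.deriv (HasDerivAt.fun_sum fun n _ => ?_)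
  have h := ((hasDerivAt_zpow (a + n) x.1 (.inl hx)).const_mul (c n)).mul_const (x.2 ^ (b - n))
  rw [show a - 1 + n = a + n - 1 by ring]
  refine h.congr_deriv ?_
  push_cast
  ring

lemma pd2_laurentSum {x : ℝ × ℝ} (hx : x.2 ≠ 0) :
    pd2 (laurentSum a b m c) x = laurentSum a (b - 1) m (fun n => (b - n : ℝ) * c n) x := by
  refine HasDerivAt.deriv (HasDerivAt.fun_sum fun n _ => ?_)
  have h := (hasDerivAt_zpow (b - n) x.2 (.inl hx)).const_mul (c n * x.1 ^ (a + n))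
  rw [show b - 1 - n = b - n - 1 by ring]
  refine h.congr_deriv ?_
  push_cast
  ring

end laurentSum

section offAxes

variable {f g : ℝ × ℝ → ℝ}

lemma Set.EqOn.pd1_offAxes (h : EqOn f g offAxes) : EqOn (pd1 f) (pd1 g) offAxes := by
  intro q hq
  refine Filter.EventuallyEq.deriv_eq ?_
  filter_upwards [eventually_ne_nhds hq.1] with x hx using h ⟨hx, hq.2⟩

lemma Set.EqOn.pd2_offAxes (h : EqOn f g offAxes) : EqOn (pd2 f) (pd2 g) offAxes := by
  intro q hq
  refine Filter.EventuallyEq.deriv_eq ?_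
  filter_upwards [eventually_ne_nhds hq.2] with y hy using h ⟨hq.1, hy⟩

end offAxes

lemma eqOn_laurentSum_ansatz (a : ℤ) (m : ℕ) (S : ℕ → ℝ) :
    EqOn (fun q : ℝ × ℝ => q.1 ^ a * ∑ n ∈ range m, S n * (q.1 / q.2) ^ n)
      (laurentSum a 0 m S) offAxes := by
  intro q hq
  simp only [laurentSum, mul_sum]
  refine sum_congr rfl fun n _ => ?_
  rw [div_pow, zero_sub, zpow_neg, zpow_add₀ hq.1, zpow_natCast, zpow_natCast]
  ring

lemma flatTeuk_residual {s ℓ a : ℤ} {N : ℕ} (hN : (N : ℤ) = ℓ - s) {S : ℕ → ℝ}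
    {α : ℝ × ℝ → ℝ} (hα : EqOn α (laurentSum a 0 (N + 1) S) offAxes) {q : ℝ × ℝ}
    (hq : q ∈ offAxes) :
    -(pd1 (fun x => x.2 ^ (-(2 * s)) * pd2 α x) q
        + pd2 (fun x => x.2 ^ (-(2 * s)) * pd2 α x) q)
      - ((-(ℓ - s) * (ℓ + s + 1) : ℤ) : ℝ) * q.2 ^ (-2 - 2 * s) * α q =
    laurentSum a (-2 - 2 * s) N (fun n => ((n : ℝ) + 1) * ((a : ℝ) + n + 1) * S (n + 1)
      + ((ℓ : ℝ) - s - n) * ((ℓ : ℝ) + s + n + 1) * S n) q := by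
  have hG : EqOn (fun x => x.2 ^ (-(2 * s)) * pd2 α x)
      (laurentSum a (-1 - 2 * s) (N + 1) (fun n => -(n : ℝ) * S n)) offAxes := by
    intro x hx
    simp only
    rw [hα.pd2_offAxes hx, pd2_laurentSum hx.2, zpow_mul_laurentSum _ hx.2]
    congr 1
    ext n
    simp
  have hpd1 := hG.pd1_offAxes hq
  rw [pd1_laurentSum hq.1, laurentSum_succ_of_first_eq_zero (by simp)] at hpd1
  rw [hpd1, hG.pd2_offAxes hq, pd2_laurentSum hq.2, hα hq, mul_assoc,
    zpow_mul_laurentSum _ hq.2, mul_laurentSum, zero_add,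
    show (-2 - 2 * s : ℤ) = -1 - 2 * s - 1 by ring, sub_eq_add_neg, neg_add, neg_laurentSum,
    neg_laurentSum, neg_laurentSum, add_assoc, laurentSum_add, laurentSum_succ_of_last_eq_zero,
    laurentSum_add]
  · congr 1
    ext n
    push_cast
    ring
  · -- the top coefficient cancels because `Λ = -(ℓ - s)(ℓ + s + 1)`
    have hN' : (N : ℝ) = ℓ - s := by exact_mod_cast hN
    push_cast
    rw [hN']
    ring

lemma coeff_eq_zero_of_sum_mul_pow_eq_zero {s : Set ℝ} (hs : s.Infinite) {m : ℕ} {c : ℕ → ℝ}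
    (h : ∀ x ∈ s, ∑ n ∈ range m, c n * x ^ n = 0) : ∀ n < m, c n = 0 := by
  set P : Polynomial ℝ := ∑ n ∈ range m, Polynomial.C (c n) * Polynomial.X ^ n
  have hP : P = 0 := by
    refine Polynomial.eq_zero_of_infinite_isRoot P (hs.mono fun x hx => ?_)
    simpa [P, Polynomial.eval_finsetSum] using h x hx
  intro n hn
  simpa [P, Polynomial.finsetSum_coeff, Polynomial.coeff_C_mul_X_pow, hn] using
    congrArg (Polynomial.coeff · n) hP

lemma laurentSum_eq_zero_on_OmegaSet_iff {a b : ℤ} {m : ℕ} {c : ℕ → ℝ} :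
    (∀ q ∈ OmegaSet, laurentSum a b m c q = 0) ↔ ∀ n < m, c n = 0 := by
  refine ⟨fun h => coeff_eq_zero_of_sum_mul_pow_eq_zero (Set.Ioo_infinite zero_lt_one)
    fun x hx => ?_, fun h q _ => sum_eq_zero fun n hn => by rw [h n (mem_range.mp hn)]; ring⟩
  have hx0 : x ≠ 0 := hx.1.ne'
  have hsum : x ^ a * ∑ n ∈ range m, c n * x ^ n = 0 := by
    rw [← h (x, 1) hx, laurentSum, mul_sum]
    refine sum_congr rfl fun n _ => ?_
    rw [one_zpow, zpow_add₀ hx0, zpow_natCast]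
    ring
  exact (mul_eq_zero.mp hsum).resolve_left (zpow_ne_zero _ hx0)

lemma flatTeuk_iff_recurrence {s ℓ a : ℤ} {N : ℕ} (hN : (N : ℤ) = ℓ - s) {S : ℕ → ℝ}
    {α : ℝ × ℝ → ℝ} (hα : EqOn α (laurentSum a 0 (N + 1) S) offAxes) :
    FlatTeuk s ℓ α ↔ ∀ n < N, ((n : ℝ) + 1) * ((a : ℝ) + n + 1) * S (n + 1)
      + ((ℓ : ℝ) - s - n) * ((ℓ : ℝ) + s + n + 1) * S n = 0 := by
  rw [← laurentSum_eq_zero_on_OmegaSet_iff (a := a) (b := -2 - 2 * s)]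
  refine forall₂_congr fun q hq => ?_
  rw [← flatTeuk_residual hN hα (OmegaSet_subset_offAxes hq), sub_eq_zero]

lemma iterate_r2dr_eqOn {a b : ℤ} {m : ℕ} {c : ℕ → ℝ} {f : ℝ × ℝ → ℝ}
    (hf : EqOn f (laurentSum a b m c) offAxes) (k : ℕ) :
    EqOn (r2dr^[k] f)
      (laurentSum a (b + k) m (fun n => (∏ j ∈ range k, ((b : ℝ) - n + j)) * c n)) offAxes := by
  induction k with
  | zero => simpa using hf
  | succ k ih =>
    intro x hx
    rw [Function.iterate_succ_apply']
    show x.2 ^ 2 * pd2 _ x = _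
    rw [ih.pd2_offAxes hx, pd2_laurentSum hx.2, ← zpow_natCast, zpow_mul_laurentSum _ hx.2]
    congr 1
    · push_cast; ring
    · ext n; rw [prod_range_succ]; push_cast; ring

lemma prod_range_neg_add_self (N : ℕ) :
    ∏ j ∈ range N, (-(N : ℝ) + j) = (-1) ^ N * N.factorial := by
  calc ∏ j ∈ range N, (-(N : ℝ) + j) = ∏ j ∈ range N, -((N : ℝ) - j) :=
        prod_congr rfl fun _ _ => by ring
    _ = (-1) ^ N * N.factorial := by
      rw [prod_neg, card_range, ← descPochhammer_eval_eq_prod_range,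
        descPochhammer_eval_eq_descFactorial, Nat.descFactorial_self]

lemma laurentSum_falling_eq_last (a : ℤ) (N : ℕ) (c : ℕ → ℝ) (x : ℝ × ℝ) :
    laurentSum a N (N + 1) (fun n => (∏ j ∈ range N, (-(n : ℝ) + j)) * c n) x =
      (-1) ^ N * N.factorial * c N * x.1 ^ (a + N) := by
  rw [laurentSum, sum_range_succ, sum_eq_zero fun n hn => ?_, prod_range_neg_add_self, sub_self,
    zpow_zero]
  · ring
  · rw [prod_eq_zero hn (neg_add_cancel _)]; ring

/-- Proposition 13.1: the power-law ansatz `α = r₀^(s−p) Σ_{n=0}^{ℓ−s} Sₙ (r₀/r)^n` solves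
the flat fixed-mode spin-`s` Teukolsky equation iff the coefficients take the stated
closed form; moreover `(r²∂_r)^(ℓ−s) α = (−1)^(ℓ−s) (ℓ−s)! S_{ℓ−s} r₀^(ℓ−p)` for any
coefficients. -/
theorem flat_teukolsky_power_ansatz
    (s ℓ : ℤ) (hsl : |s| ≤ ℓ) (p : ℕ) (hp : (p : ℤ) ≤ ℓ) (S : ℕ → ℝ)
    (α : ℝ × ℝ → ℝ)
    (hα : α = fun q =>
      q.1 ^ (s - (p : ℤ)) * ∑ n ∈ Finset.range ((ℓ - s).toNat + 1), S n * (q.1 / q.2) ^ n) :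
    (FlatTeuk s ℓ α ↔
        ∀ n : ℕ, n ≤ (ℓ - s).toNat →
          S n = S (ℓ - s).toNat *
            ((-1 : ℝ) ^ (ℓ - s + (n : ℤ)) * zfactR (ℓ - s) * zfactR (ℓ - (p : ℤ)) /
              zfactR (2 * ℓ)) *
            (zfactR (ℓ + s + (n : ℤ)) * invZfact (s - (p : ℤ) + (n : ℤ)) /
              (zfactR (n : ℤ) * zfactR (ℓ - s - (n : ℤ))))) ∧
      ∀ q ∈ OmegaSet,
        (r2dr^[(ℓ - s).toNat] α) q =
          (-1 : ℝ) ^ (ℓ - s) * zfactR (ℓ - s) * S (ℓ - s).toNat * q.1 ^ (ℓ - (p : ℤ)) := by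
  obtain ⟨hls, hsℓ⟩ := abs_le.mp hsl
  have hN : ((ℓ - s).toNat : ℤ) = ℓ - s := Int.toNat_of_nonneg (by omega)
  have hα' := hα ▸ eqOn_laurentSum_ansatz (s - p) ((ℓ - s).toNat + 1) S
  refine ⟨?_, fun q hq => ?_⟩
  · rw [flatTeuk_iff_recurrence hN hα', recurrence_iff_eq_mul_of_last
      (fun n hn => teukRecurrence_coeff_ne_zero (by omega) (by omega))
      (fun n hn => teukCoeff_recurrence p (by omega) (by omega)) (teukCoeff_self hN hp)]
    simp only [teukCoeff, mul_assoc]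
  · rw [iterate_r2dr_eqOn hα' _ (OmegaSet_subset_offAxes hq)]
    simp only [Int.cast_zero, zero_sub, zero_add]
    rw [laurentSum_falling_eq_last, ← hN, zpow_natCast, zfactR, Int.toNat_natCast,
      show s - p + (ℓ - s).toNat = ℓ - p by omega]
end
end

section
/- Let p ∈ ℝ, let S₀, …, S_{ℓ−s} be real numbers, set S_{−1} := 0 and S_{ℓ−s+1} := 0, and define α(r₀, r) := r₀^(s−p) · Σ_{n=0}^{ℓ−s} S_n · (r₀/r)^n on Ω. Then, pointwise on Ω, g[α] = ( 2M / ( r² · r₀^(1+p−s) ) ) · Σ_{n=0}^{ℓ−s+1} T_n · (r₀/r)^n, where T_n := (n−ℓ+s)(n+ℓ+s+1)·S_n − (n+s)(n+2s)·S_{n−1}. (Proposition 13.3: the computation of the inhomogeneity of the first-order post-Minkowskian Teukolsky equation generated by a Minkowskian solution ansatz.) -/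
/-!
Each monomial `(r₀/r)^n` is homogeneous of degree `-n` in `r`, so `∂_r` and `∂_r²` act on it
by multiplication with `-n/r` and `n(n+1)/r²`. Since `D₀ - D = 2M/r - 2M/r₀`, the operator `g`
sends `r₀^(s-p) (r₀/r)^n` to `2M r₀^(s-p)/(r² r₀)` times a combination of `(r₀/r)^n` and
`(r₀/r)^(n+1)`; collecting powers shifts the second family by one, and the boundary terms vanish
because `S₋₁ = S_{ℓ-s+1} = 0`.
-/

noncomputable section

open Finset

lemma hasDerivAt_div_pow (c : ℝ) (n : ℕ) {y : ℝ} (hy : y ≠ 0) :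
    HasDerivAt (fun y => (c / y) ^ n) (-(n : ℝ) / y * (c / y) ^ n) y := by
  have h := ((hasDerivAt_inv hy).const_mul c).fun_pow n
  simp only [← div_eq_mul_inv] at h
  refine h.congr_deriv ?_
  rcases n with _ | n
  · simp
  · rw [Nat.add_sub_cancel, pow_succ (c / y) n]
    field_simp

lemma hasDerivAt_div_mul_div_pow (k c : ℝ) (n : ℕ) {y : ℝ} (hy : y ≠ 0) :
    HasDerivAt (fun y => k / y * (c / y) ^ n) (-(k * (n + 1)) / y ^ 2 * (c / y) ^ n) y := by
  have h := ((hasDerivAt_inv hy).const_mul k).fun_mul (hasDerivAt_div_pow c n hy)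
  simp only [← div_eq_mul_inv] at h
  refine h.congr_deriv ?_
  field_simp
  ring

lemma hasDerivAt_sum_div_pow (t : Finset ℕ) (a : ℕ → ℝ) (c : ℝ) {y : ℝ} (hy : y ≠ 0) :
    HasDerivAt (fun y => ∑ n ∈ t, a n * (c / y) ^ n)
      (∑ n ∈ t, a n * (-(n : ℝ) / y * (c / y) ^ n)) y :=
  HasDerivAt.fun_sum fun n _ => (hasDerivAt_div_pow c n hy).const_mul (a n)

lemma deriv_deriv_sum_div_pow (t : Finset ℕ) (a : ℕ → ℝ) (c : ℝ) {y : ℝ} (hy : y ≠ 0) :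
    deriv (deriv fun y => ∑ n ∈ t, a n * (c / y) ^ n) y =
      ∑ n ∈ t, a n * ((n : ℝ) * (n + 1) / y ^ 2 * (c / y) ^ n) := by
  have h : deriv (fun y => ∑ n ∈ t, a n * (c / y) ^ n) =ᶠ[nhds y]
      fun y => ∑ n ∈ t, a n * (-(n : ℝ) / y * (c / y) ^ n) := by
    filter_upwards [eventually_ne_nhds hy] with z hz using (hasDerivAt_sum_div_pow t a c hz).deriv
  rw [h.deriv_eq]
  refine (HasDerivAt.fun_sum fun n _ =>
    (hasDerivAt_div_mul_div_pow _ c n hy).const_mul (a n)).deriv.trans (sum_congr rfl fun n _ => ?_)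
  ring

lemma pd2_fst_mul (u : ℝ → ℝ) (f : ℝ × ℝ → ℝ) :
    pd2 (fun q => u q.1 * f q) = fun q => u q.1 * pd2 f q :=
  funext fun q => deriv_const_mul_field (u q.1)

lemma sum_range_succ_sub_shift {β : Type*} [AddCommGroup β] (F G : ℕ → β) (N : ℕ)
    (hF : F (N + 1) = 0) (hG : G 0 = 0) :
    ∑ n ∈ range (N + 2), (F n - G n) = ∑ n ∈ range (N + 1), (F n - G (n + 1)) := by
  rw [sum_sub_distrib, sum_sub_distrib, sum_range_succ F, hF, add_zero, sum_range_succ' G, hG,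
    add_zero]

lemma inhomogeneity_monomial (M s ℓ : ℝ) (n : ℕ) {r₀ r : ℝ} (hr₀ : r₀ ≠ 0) (hr : r ≠ 0) :
    2 * M * (-(ℓ - s) * (ℓ + s + 1)) / (r ^ 2 * r₀) * (r₀ / r) ^ n
        - 2 * M * ((1 + s) * (1 + 2 * s)) / r ^ 3 * (r₀ / r) ^ n
        + (s + 1) * (2 * M / r ^ 2) * (-(n : ℝ) / r * (r₀ / r) ^ n)
        + 2 * s / r * ((1 - 2 * M / r₀) - (1 - 2 * M / r)) * (-(n : ℝ) / r * (r₀ / r) ^ n)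
        - ((1 - 2 * M / r₀) - (1 - 2 * M / r)) * ((n : ℝ) * (n + 1) / r ^ 2 * (r₀ / r) ^ n) =
      2 * M / (r ^ 2 * r₀) * ((n - ℓ + s) * (n + ℓ + s + 1) * (r₀ / r) ^ n
        - (n + 1 + s) * (n + 1 + 2 * s) * (r₀ / r) ^ (n + 1)) := by
  rw [pow_succ (r₀ / r) n]
  field_simp
  ring

theorem post_minkowskian_inhomogeneity_general
    (M : ℝ) (s ℓ : ℤ)
    (p : ℝ) (S : ℤ → ℝ)
    (hSneg : ∀ n : ℤ, n < 0 → S n = 0)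
    (hStop : ∀ n : ℤ, ℓ - s < n → S n = 0)
    (α : ℝ × ℝ → ℝ)
    (hα : α = fun q =>
      q.1 ^ ((s : ℝ) - p) *
        ∑ n ∈ Finset.range ((ℓ - s).toNat + 1), S (n : ℤ) * (q.1 / q.2) ^ n) :
    ∀ q ∈ OmegaSet,
      2 * M * ((-(ℓ - s) * (ℓ + s + 1) : ℤ) : ℝ) / (q.2 ^ 2 * q.1) * α q
          - 2 * M * (((1 + s) * (1 + 2 * s) : ℤ) : ℝ) / q.2 ^ 3 * α q
          + ((s : ℝ) + 1) * (2 * M / q.2 ^ 2) * pd2 α q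
          + 2 * (s : ℝ) / q.2 * ((1 - 2 * M / q.1) - (1 - 2 * M / q.2)) * pd2 α q
          - ((1 - 2 * M / q.1) - (1 - 2 * M / q.2)) * pd2 (pd2 α) q =
        2 * M / (q.2 ^ 2 * q.1 ^ (1 + p - (s : ℝ))) *
          ∑ n ∈ Finset.range ((ℓ - s).toNat + 2),
            (((((n : ℤ) - ℓ + s) * ((n : ℤ) + ℓ + s + 1) : ℤ) : ℝ) * S (n : ℤ)
                - ((((n : ℤ) + s) * ((n : ℤ) + 2 * s) : ℤ) : ℝ) * S ((n : ℤ) - 1)) *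
            (q.1 / q.2) ^ n := by
  rintro ⟨r₀, r⟩ ⟨hr₀, hr₀r⟩
  have hr : r ≠ 0 := (hr₀.trans hr₀r).ne'
  have hpre : 2 * M / (r ^ 2 * r₀ ^ (1 + p - (s : ℝ))) =
      r₀ ^ ((s : ℝ) - p) * (2 * M / (r ^ 2 * r₀)) := by
    rw [show 1 + p - (s : ℝ) = 1 - ((s : ℝ) - p) by ring, Real.rpow_sub hr₀, Real.rpow_one]
    field_simp
  set N := (ℓ - s).toNat
  set G : ℝ × ℝ → ℝ := fun q => ∑ n ∈ range (N + 1), S n * (q.1 / q.2) ^ n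
  have hG₁ : pd2 G (r₀, r) = ∑ n ∈ range (N + 1), S n * (-(n : ℝ) / r * (r₀ / r) ^ n) :=
    (hasDerivAt_sum_div_pow _ _ _ hr).deriv
  have hG₂ : pd2 (pd2 G) (r₀, r) =
      ∑ n ∈ range (N + 1), S n * ((n : ℝ) * (n + 1) / r ^ 2 * (r₀ / r) ^ n) :=
    deriv_deriv_sum_div_pow _ _ _ hr
  rw [show α = fun q => q.1 ^ ((s : ℝ) - p) * G q from hα, pd2_fst_mul (· ^ ((s : ℝ) - p)),
    pd2_fst_mul (· ^ ((s : ℝ) - p))]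
  dsimp only
  rw [hG₁, hG₂, hpre]
  conv_rhs => enter [2, 2, n]; rw [sub_mul]
  rw [sum_range_succ_sub_shift _ _ N (by rw [hStop _ (by omega), mul_zero, zero_mul])
    (by rw [hSneg _ (by norm_num), mul_zero, zero_mul])]
  simp only [G, mul_sum, ← sum_sub_distrib, ← sum_add_distrib]
  refine sum_congr rfl fun n _ => ?_
  push_cast
  rw [add_sub_cancel_right]
  linear_combination r₀ ^ ((s : ℝ) - p) * S n * inhomogeneity_monomial M s ℓ n hr₀.ne' hr

/-- Proposition 13.3: the inhomogeneity
`g[α] = (2MΛ/(r²r₀))α − (2M(1+s)(1+2s)/r³)α + (s+1)(2M/r²)∂_rα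
        + (2s/r)(D₀−D)∂_rα − (D₀−D)∂_r²α`
of the first-order post-Minkowskian Teukolsky equation generated by the Minkowskian
solution ansatz `α = r₀^(s−p) Σ_{n=0}^{ℓ−s} Sₙ (r₀/r)^n` (with `S₋₁ = S_{ℓ−s+1} = 0`)
equals `(2M/(r²r₀^(1+p−s))) Σ_{n=0}^{ℓ−s+1} Tₙ (r₀/r)^n`, where
`Tₙ = (n−ℓ+s)(n+ℓ+s+1)Sₙ − (n+s)(n+2s)S_{n−1}`. -/
theorem post_minkowskian_inhomogeneity
    (M : ℝ) (hM : 0 ≤ M) (s ℓ : ℤ) (hsl : |s| ≤ ℓ)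
    (p : ℝ) (S : ℤ → ℝ)
    (hSneg : ∀ n : ℤ, n < 0 → S n = 0)
    (hStop : ∀ n : ℤ, ℓ - s < n → S n = 0)
    (α : ℝ × ℝ → ℝ)
    (hα : α = fun q =>
      q.1 ^ ((s : ℝ) - p) *
        ∑ n ∈ Finset.range ((ℓ - s).toNat + 1), S (n : ℤ) * (q.1 / q.2) ^ n) :
    ∀ q ∈ OmegaSet,
      2 * M * ((-(ℓ - s) * (ℓ + s + 1) : ℤ) : ℝ) / (q.2 ^ 2 * q.1) * α q
          - 2 * M * (((1 + s) * (1 + 2 * s) : ℤ) : ℝ) / q.2 ^ 3 * α q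
          + ((s : ℝ) + 1) * (2 * M / q.2 ^ 2) * pd2 α q
          + 2 * (s : ℝ) / q.2 * ((1 - 2 * M / q.1) - (1 - 2 * M / q.2)) * pd2 α q
          - ((1 - 2 * M / q.1) - (1 - 2 * M / q.2)) * pd2 (pd2 α) q =
        2 * M / (q.2 ^ 2 * q.1 ^ (1 + p - (s : ℝ))) *
          ∑ n ∈ Finset.range ((ℓ - s).toNat + 2),
            (((((n : ℤ) - ℓ + s) * ((n : ℤ) + ℓ + s + 1) : ℤ) : ℝ) * S (n : ℤ)
                - ((((n : ℤ) + s) * ((n : ℤ) + 2 * s) : ℤ) : ℝ) * S ((n : ℤ) - 1)) *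
            (q.1 / q.2) ^ n :=
  post_minkowskian_inhomogeneity_general M s ℓ p S hSneg hStop α hα
end
end

section
/- For every integer ℓ ≥ 2 one has (−1)^ℓ · Σ_{n=0}^{ℓ−2} [ (−1)^n / (n+2) ] · ( (ℓ+2+n)! / ( n! · (n+2)! · (ℓ−2−n)! ) ) = −1 + (−1)^ℓ + ℓ(ℓ+1). (This is identity (14.8), used in the computation of the limit of r²χ̂ at future null infinity.) -/
/-!
Put `m = n + 2`. Then `(-1)^ℓ` times the `n`-th summand is
`(-1)^(ℓ-m) (m-1) C(ℓ,m) C(m+ℓ,ℓ)`, and the terms `m = 0, 1` that complete the sum to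
`0 ≤ m ≤ ℓ` equal `-(-1)^ℓ` and `0`. Writing `(m-1) C(m+ℓ,ℓ) = (ℓ+1) C(m+ℓ,ℓ+1) - C(m+ℓ,ℓ)`,
the complete sum consists of two `ℓ`-th forward differences of binomial coefficients in `m`,
which are `C(ℓ,1) = ℓ` and `C(ℓ,0) = 1`.
-/

open Finset

theorem sum_neg_one_pow_mul_choose_mul_choose_add {R : Type*} [CommRing R] (ℓ a j : ℕ) :
    ∑ k ∈ range (ℓ + 1), (-1 : R) ^ (ℓ - k) * ℓ.choose k * (k + a).choose (ℓ + j) =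
      a.choose j := by
  have h := fwdDiff_iter_comp_add 1 (fun x ↦ (x.choose (ℓ + j) : ℤ)) a ℓ 0
  rw [fwdDiff_iter_choose, fwdDiff_iter_eq_sum_shift] at h
  simp only [zero_add, smul_eq_mul, mul_one] at h
  exact_mod_cast congrArg (Int.cast : ℤ → R) h

theorem sum_neg_one_pow_mul_choose_mul_pred_mul_choose {R : Type*} [CommRing R] (ℓ : ℕ) :
    ∑ k ∈ range (ℓ + 1), (-1 : R) ^ (ℓ - k) * ℓ.choose k * ((k : R) - 1) * (k + ℓ).choose ℓ =
      ℓ * (ℓ + 1) - 1 := by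
  have hk (k : ℕ) : (-1 : R) ^ (ℓ - k) * ℓ.choose k * ((k : R) - 1) * (k + ℓ).choose ℓ =
      (ℓ + 1) * ((-1 : R) ^ (ℓ - k) * ℓ.choose k * (k + ℓ).choose (ℓ + 1)) -
        (-1 : R) ^ (ℓ - k) * ℓ.choose k * (k + ℓ).choose (ℓ + 0) := by
    have h := Nat.choose_succ_right_eq (k + ℓ) ℓ
    rw [Nat.add_sub_cancel] at h
    have h' : ((k + ℓ).choose ℓ : R) * k = (k + ℓ).choose (ℓ + 1) * (ℓ + 1) := by
      exact_mod_cast congrArg (Nat.cast : ℕ → R) h.symm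
    linear_combination (-1 : R) ^ (ℓ - k) * ℓ.choose k * h'
  simp only [hk, sum_sub_distrib, ← mul_sum, sum_neg_one_pow_mul_choose_mul_choose_add,
    Nat.choose_one_right, Nat.choose_zero_right]
  push_cast
  ring

theorem neg_one_pow_mul_factorial_quotient_eq_choose_mul_choose {ℓ n : ℕ} (h : n + 2 ≤ ℓ) :
    (-1 : ℚ) ^ ℓ * ((-1 : ℚ) ^ n / ((n : ℚ) + 2) *
      ((Nat.factorial (ℓ + 2 + n) : ℚ) /
        ((Nat.factorial n : ℚ) * (Nat.factorial (n + 2) : ℚ) * (Nat.factorial (ℓ - 2 - n) : ℚ)))) =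
      (-1 : ℚ) ^ (ℓ - (2 + n)) * ℓ.choose (2 + n) * (((2 + n : ℕ) : ℚ) - 1) *
        (2 + n + ℓ).choose ℓ := by
  obtain ⟨r, rfl⟩ := Nat.exists_eq_add_of_le h
  have hsign : (-1 : ℚ) ^ (n + 2 + r) * (-1) ^ n = (-1) ^ r := by
    rw [← pow_add, show n + 2 + r + n = 2 * (n + 1) + r by ring, pow_add, pow_mul]
    norm_num
  rw [add_comm 2 n, show n + 2 + r - 2 - n = r by omega, Nat.add_sub_cancel_left,
    Nat.cast_choose ℚ (Nat.le_add_right _ _), Nat.cast_choose ℚ (Nat.le_add_left _ _),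
    Nat.add_sub_cancel_left, Nat.add_sub_cancel, ← hsign]
  simp only [Nat.factorial_succ]
  push_cast
  field_simp
  rw [show n + 2 + (n + 2 + r) = n + 2 + r + 2 + n by ring]
  ring

/-- Identity (14.8), used in the computation of the limit of `r²χ̂` at future null
infinity: for every integer `ℓ ≥ 2`,
`(−1)^ℓ · Σ_{n=0}^{ℓ−2} (−1)^n/(n+2) · (ℓ+2+n)!/(n!·(n+2)!·(ℓ−2−n)!) = −1 + (−1)^ℓ + ℓ(ℓ+1)`. -/
theorem chihat_limit_sum_identity (ℓ : ℕ) (hℓ : 2 ≤ ℓ) :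
    (-1 : ℚ) ^ ℓ *
        ∑ n ∈ Finset.range (ℓ - 1),
          (-1 : ℚ) ^ n / ((n : ℚ) + 2) *
            ((Nat.factorial (ℓ + 2 + n) : ℚ) /
              ((Nat.factorial n : ℚ) * (Nat.factorial (n + 2) : ℚ) *
                (Nat.factorial (ℓ - 2 - n) : ℚ))) =
      -1 + (-1 : ℚ) ^ ℓ + (ℓ : ℚ) * ((ℓ : ℚ) + 1) := by
  have hfull := sum_neg_one_pow_mul_choose_mul_pred_mul_choose (R := ℚ) ℓ
  rw [show ℓ + 1 = 2 + (ℓ - 1) by omega, sum_range_add] at hfull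
  rw [mul_sum, sum_congr rfl fun n hn ↦
    neg_one_pow_mul_factorial_quotient_eq_choose_mul_choose (by simp at hn; omega)]
  simp only [sum_range_succ, sum_range_zero, Nat.sub_zero, Nat.choose_zero_right, Nat.choose_self,
    zero_add, Nat.cast_zero, Nat.cast_one, sub_self, mul_zero, zero_mul, add_zero] at hfull
  push_cast at hfull ⊢
  linarith
end

section
/- Let x₀ > 0, let q be a real number, and assume either q ∉ ℤ, or q ∈ ℤ and N ≤ q−1. Then for every integer N ≥ 1 satisfying the assumption and every x > 0: (−1)^N · I_N[t ↦ t^(−q)](x) = ( Γ(q−N)/Γ(q) ) · x^(N−q) − x₀^(N−q) · Σ_{i=0}^{N−1} ( Γ(q+i−N) / ( Γ(q) · i! ) ) · ( 1 − x/x₀ )^i. (This is Lemma B.6, eq. (B.9), with the convention a! = Γ(a+1): the explicit evaluation of the N-fold iterated primitive of t^(−q) based at x₀.) -/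
noncomputable section

/-- Iterated primitives based at `x₀`: `I₀[f] = f` and
`I_{k+1}[f](x) = ∫_{x₀}^{x} I_k[f](t) dt`. -/
def iterPrim (x₀ : ℝ) : ℕ → (ℝ → ℝ) → ℝ → ℝ
  | 0, f => f
  | k + 1, f => fun x => ∫ t in x₀..x, iterPrim x₀ k f t

/-! For `N ≥ 1`, `(-1)^N` times the right-hand side vanishes at `x₀`, and its derivative is the
same expression for `N - 1`: differentiating `x^(N-q)` brings out `N - q`, absorbed by
`Γ(q-N+1) = (q-N) Γ(q-N)` (valid since `q ≠ N`), while differentiating the sum in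
`1 - x/x₀` shifts its index by one. For `N = 0` the expression is `x^(-q)` since `Γ q ≠ 0`, so the
fundamental theorem of calculus identifies it with the iterated primitive by induction on `N`. -/

open Finset Set Nat

theorem iterPrim_succ_eqOn {s : Set ℝ} (hs : s.OrdConnected) {x₀ : ℝ} (hx₀ : x₀ ∈ s)
    {f F G : ℝ → ℝ} {k : ℕ} (hk : EqOn (iterPrim x₀ k f) G s) (hG : ContinuousOn G s)
    (hF : ∀ t ∈ s, HasDerivAt F (G t) t) (hF₀ : F x₀ = 0) :
    EqOn (iterPrim x₀ (k + 1) f) F s := by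
  intro x hx
  have hsub : uIcc x₀ x ⊆ s := hs.uIcc_subset hx₀ hx
  calc iterPrim x₀ (k + 1) f x = ∫ t in x₀..x, G t :=
        intervalIntegral.integral_congr (hk.mono hsub)
    _ = F x - F x₀ := intervalIntegral.integral_eq_sub_of_hasDerivAt
        (fun t ht => hF t (hsub ht)) ((hG.mono hsub).intervalIntegrable)
    _ = F x := by rw [hF₀, sub_zero]

theorem hasDerivAt_sum_range_succ_div_factorial_mul_pow (c : ℕ → ℝ) (n : ℕ) (y : ℝ) :
    HasDerivAt (fun y => ∑ i ∈ range (n + 1), c i / i ! * y ^ i)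
      (∑ i ∈ range n, c (i + 1) / i ! * y ^ i) y := by
  refine (HasDerivAt.fun_sum fun i _ =>
    (hasDerivAt_pow i y).const_mul (c i / i !)).congr_deriv ?_
  rw [sum_range_succ']
  simp only [CharP.cast_eq_zero, zero_mul, mul_zero, add_zero, add_tsub_cancel_right]
  refine sum_congr rfl fun i _ => ?_
  rw [factorial_succ]
  push_cast
  field_simp

theorem Real.Gamma_sub_succ_mul {q : ℝ} {k : ℕ} (hq : q ≠ k + 1) :
    Real.Gamma (q - (k + 1)) * ((k + 1) - q) = -Real.Gamma (q - k) := by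
  have h := Real.Gamma_add_one (sub_ne_zero.mpr hq)
  rw [show q - (k + 1) + 1 = q - k by ring] at h
  rw [h]; ring

def iterPrimClosedForm (x₀ q : ℝ) (N : ℕ) (x : ℝ) : ℝ :=
  Real.Gamma (q - N) / Real.Gamma q * x ^ ((N : ℝ) - q) -
    x₀ ^ ((N : ℝ) - q) *
      ∑ i ∈ range N, Real.Gamma (q + i - N) / Real.Gamma q / i ! * (1 - x / x₀) ^ i

namespace iterPrimClosedForm

variable {x₀ q : ℝ}

theorem zero (hq : Real.Gamma q ≠ 0) (x : ℝ) : iterPrimClosedForm x₀ q 0 x = x ^ (-q) := by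
  simp [iterPrimClosedForm, hq]

theorem succ_self (hx₀ : x₀ ≠ 0) (k : ℕ) : iterPrimClosedForm x₀ q (k + 1) x₀ = 0 := by
  simp [iterPrimClosedForm, sum_range_succ', hx₀, mul_comm]

theorem continuousOn (N : ℕ) : ContinuousOn (iterPrimClosedForm x₀ q N) (Ioi 0) :=
  (continuousOn_const.mul (continuousOn_id.rpow_const fun _ hx => Or.inl (ne_of_gt hx))).sub
    (by fun_prop : Continuous _).continuousOn

theorem hasDerivAt_succ (hx₀ : x₀ ≠ 0) {k : ℕ} (hq : q ≠ k + 1) {x : ℝ} (hx : x ≠ 0) :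
    HasDerivAt (iterPrimClosedForm x₀ q (k + 1)) (-iterPrimClosedForm x₀ q k x) x := by
  have hpow := (Real.hasDerivAt_rpow_const (p := (k + 1 : ℝ) - q) (Or.inl hx)).const_mul
    (Real.Gamma (q - (k + 1)) / Real.Gamma q)
  have hsum := (hasDerivAt_sum_range_succ_div_factorial_mul_pow
    (fun i => Real.Gamma (q + i - (k + 1)) / Real.Gamma q) k (1 - x / x₀)).comp x
      (((hasDerivAt_id x).div_const x₀).const_sub 1)
  have hcoef (i : ℕ) : q + ((i + 1 : ℕ) : ℝ) - (k + 1) = q + i - k := by push_cast; ring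
  refine ((hpow.sub (hsum.const_mul (x₀ ^ ((k + 1 : ℝ) - q)))).congr_deriv ?_)
    |>.congr_of_eventuallyEq ?_
  · simp only [hcoef, iterPrimClosedForm]
    set S := ∑ i ∈ range k, Real.Gamma (q + i - k) / Real.Gamma q / i ! * (1 - x / x₀) ^ i
    rw [show (k + 1 : ℝ) - q - 1 = k - q by ring, show (k + 1 : ℝ) - q = k - q + 1 by ring,
      Real.rpow_add_one hx₀]
    linear_combination (x ^ ((k : ℝ) - q) / Real.Gamma q) * Real.Gamma_sub_succ_mul hq +
      x₀ ^ ((k : ℝ) - q) * S * mul_inv_cancel₀ hx₀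
  · refine .of_eq (funext fun y => ?_)
    simp only [iterPrimClosedForm, Function.comp_apply, id, Pi.sub_apply]
    push_cast
    ring

end iterPrimClosedForm

open iterPrimClosedForm in
theorem iterPrim_rpow_neg_eqOn {x₀ q : ℝ} (hx₀ : 0 < x₀) {N : ℕ}
    (hq : ∀ m : ℤ, (m : ℝ) ≤ N → q ≠ m) :
    EqOn (iterPrim x₀ N fun t => t ^ (-q)) (fun x => (-1) ^ N * iterPrimClosedForm x₀ q N x)
      (Ioi 0) := by
  induction N with
  | zero =>
    have hΓ : Real.Gamma q ≠ 0 :=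
      Real.Gamma_ne_zero fun m => by exact_mod_cast hq (-m) (by simp)
    intro x _
    simp [iterPrim, zero hΓ]
  | succ N ih =>
    have hqN : q ≠ N + 1 := by exact_mod_cast hq (N + 1) (by simp)
    refine iterPrim_succ_eqOn ordConnected_Ioi hx₀ (ih fun m hm => hq m (by push_cast; linarith))
      (continuousOn_const.mul (continuousOn N)) (fun t ht => ?_) (by simp [succ_self hx₀.ne'])
    exact ((hasDerivAt_succ hx₀.ne' hqN (ne_of_gt ht)).const_mul _).congr_deriv (by ring)

theorem iterated_primitive_rpow_general (x₀ : ℝ) (hx₀ : 0 < x₀) (q : ℝ) (N : ℕ)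
    (hq : (¬∃ m : ℤ, q = (m : ℝ)) ∨ ((∃ m : ℤ, q = (m : ℝ)) ∧ (N : ℝ) ≤ q - 1)) :
    ∀ x : ℝ, 0 < x →
      (-1 : ℝ) ^ N * iterPrim x₀ N (fun t => t ^ (-q)) x =
        Real.Gamma (q - N) / Real.Gamma q * x ^ ((N : ℝ) - q) -
          x₀ ^ ((N : ℝ) - q) *
            ∑ i ∈ Finset.range N,
              Real.Gamma (q + (i : ℝ) - N) / (Real.Gamma q * (Nat.factorial i : ℝ)) *
                (1 - x / x₀) ^ i := by
  intro x hx
  have hq_ne : ∀ m : ℤ, (m : ℝ) ≤ N → q ≠ m := by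
    rintro m hm rfl
    rcases hq with h | ⟨_, h⟩
    · exact h ⟨m, rfl⟩
    · linarith
  rw [iterPrim_rpow_neg_eqOn hx₀ hq_ne hx, ← mul_assoc, ← pow_add, Even.neg_one_pow ⟨N, rfl⟩,
    one_mul, iterPrimClosedForm]
  simp only [div_div]

/-- Lemma B.6, eq. (B.9) (with the convention `a! = Γ(a+1)`): the explicit evaluation of
the `N`-fold iterated primitive of `t^(−q)` based at `x₀`, in the subcritical range. -/
theorem iterated_primitive_rpow (x₀ : ℝ) (hx₀ : 0 < x₀) (q : ℝ) (N : ℕ) (hN : 1 ≤ N)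
    (hq : (¬∃ m : ℤ, q = (m : ℝ)) ∨ ((∃ m : ℤ, q = (m : ℝ)) ∧ (N : ℝ) ≤ q - 1)) :
    ∀ x : ℝ, 0 < x →
      (-1 : ℝ) ^ N * iterPrim x₀ N (fun t => t ^ (-q)) x =
        Real.Gamma (q - N) / Real.Gamma q * x ^ ((N : ℝ) - q) -
          x₀ ^ ((N : ℝ) - q) *
            ∑ i ∈ Finset.range N,
              Real.Gamma (q + (i : ℝ) - N) / (Real.Gamma q * (Nat.factorial i : ℝ)) *
                (1 - x / x₀) ^ i :=
  iterated_primitive_rpow_general x₀ hx₀ q N hq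
end
end

section
/- Let x₀ > 0, let q ∈ ℕ with q ≥ 1, and let N ∈ ℕ with N ≥ q. Then there exist rational numbers d₀, …, d_{N−1} (depending only on N and q) such that for every x > 0: (−1)^N · I_N[t ↦ t^(−q)](x) = ( (−1)^(N+1−q) / ( (q−1)! · (N−q)! ) ) · x^(N−q) · log(x/x₀) − x₀^(N−q) · Σ_{i=0}^{N−1} d_i · ( 1 − x/x₀ )^i. (This is Lemma B.6, eq. (B.10): for integer q in the supercritical range the N-fold iterated primitive of t^(−q) based at x₀ produces a logarithm with the stated explicit coefficient.) -/
/-!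
Since `t ^ (-q)` is homogeneous, the substitution `t = x₀ s` reduces everything to the base
point `1`, with a factor `x₀ ^ (N - q)`. At base point `1` one integrates a step at a time,
keeping track of one singular term plus a polynomial with rational coefficients of degree `< k`:
for `k < q` the singular term is `(-1)^k / ((q-1)⋯(q-k)) y^(k-q)`; at step `q` the term `y⁻¹`
integrates to `log y`; afterwards `∫ y^m log y = y^(m+1) log y / (m+1) - y^(m+1) / (m+1)^2`
only divides the coefficient of the logarithm by `m + 1`, which produces
`(-1)^(q-1) / ((q-1)! (k-q)!)`. Finally the polynomial is re-expanded in powers of `1 - y`.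
-/

noncomputable section

open Polynomial

lemma iterPrim_const_mul (a c : ℝ) (f : ℝ → ℝ) (k : ℕ) (x : ℝ) :
    iterPrim a k (fun t => c * f t) x = c * iterPrim a k f x := by
  induction k generalizing x with
  | zero => rfl
  | succ k ih => simp only [iterPrim, ih, intervalIntegral.integral_const_mul]

lemma iterPrim_mul_mul (a c : ℝ) (f : ℝ → ℝ) (k : ℕ) (x : ℝ) :
    iterPrim (c * a) k f (c * x) = c ^ k * iterPrim a k (fun s => f (c * s)) x := by
  induction k generalizing x with
  | zero => simp [iterPrim]
  | succ k ih =>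
    simp only [iterPrim, ← intervalIntegral.smul_integral_comp_mul_left, ih,
      intervalIntegral.integral_const_mul, smul_eq_mul]
    ring

lemma iterPrim_zpow_eq_rescale {x₀ : ℝ} (hx₀ : x₀ ≠ 0) (n : ℤ) (k : ℕ) (x : ℝ) :
    iterPrim x₀ k (fun t => t ^ n) x =
      x₀ ^ (k + n) * iterPrim 1 k (fun t => t ^ n) (x / x₀) := by
  have h := iterPrim_mul_mul 1 x₀ (fun t => t ^ n) k (x / x₀)
  simp only [mul_one, mul_div_cancel₀ x hx₀, mul_zpow, iterPrim_const_mul] at h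
  rw [h, zpow_add₀ hx₀, zpow_natCast, mul_assoc]

lemma iterPrim_succ_eq_sub_of_hasDerivAt {a y : ℝ} (ha : 0 < a) (hy : 0 < y) {f F G : ℝ → ℝ}
    {k : ℕ} (hk : ∀ t, 0 < t → iterPrim a k f t = F t)
    (hG : ∀ t, 0 < t → HasDerivAt G (F t) t) (hF : ContinuousOn F (Set.Ioi 0)) :
    iterPrim a (k + 1) f y = G y - G a := by
  have hpos : Set.uIcc a y ⊆ Set.Ioi 0 := Set.ordConnected_Ioi.uIcc_subset ha hy
  calc iterPrim a (k + 1) f y = ∫ t in a..y, F t :=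
        intervalIntegral.integral_congr fun t ht => hk t (hpos ht)
    _ = G y - G a := intervalIntegral.integral_eq_sub_of_hasDerivAt
        (fun t ht => hG t (hpos ht)) ((hF.mono hpos).intervalIntegrable)

lemma degreeLT_le_map_derivative (K : Type*) [Field K] [CharZero K] (n : ℕ) :
    K[X]_n ≤ (K[X]_(n + 1)).map (derivative : K[X] →ₗ[K] K[X]) := by
  classical
  rw [degreeLT_eq_span_X_pow, Submodule.span_le]
  intro p hp
  obtain ⟨i, hi, rfl⟩ := Finset.mem_image.1 hp
  refine ⟨C ((i : K) + 1)⁻¹ * X ^ (i + 1), ?_, ?_⟩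
  · exact mem_degreeLT.2 ((degree_C_mul_X_pow_le _ _).trans_lt
      (by exact_mod_cast Nat.succ_lt_succ (Finset.mem_range.1 hi)))
  · rw [derivative_C_mul_X_pow, Nat.add_sub_cancel, Nat.cast_succ,
      inv_mul_cancel₀ (Nat.cast_add_one_ne_zero i), C_1, one_mul]

/- The constant of integration `-(G 1 + P 1)` is absorbed into the polynomial; it is rational
because `G 1` is and the base point is `1`. -/
lemma exists_iterPrim_succ_eq_add_aeval {f F G : ℝ → ℝ} {k n : ℕ} {p : ℚ[X]} {c : ℚ}
    (hp : p ∈ ℚ[X]_n) (hk : ∀ t, 0 < t → iterPrim 1 k f t = F t + aeval t p)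
    (hG : ∀ t, 0 < t → HasDerivAt G (F t) t) (hF : ContinuousOn F (Set.Ioi 0)) (hG1 : G 1 = c) :
    ∃ P ∈ ℚ[X]_(n + 1), ∀ y, 0 < y → iterPrim 1 (k + 1) f y = G y + aeval y P := by
  obtain ⟨P, hP, hPp⟩ := degreeLT_le_map_derivative ℚ n hp
  have hconst : C (c + P.eval 1) ∈ ℚ[X]_(n + 1) :=
    mem_degreeLT.2 (degree_C_le.trans_lt (by exact_mod_cast n.succ_pos))
  refine ⟨P - C (c + P.eval 1), sub_mem hP hconst, fun y hy => ?_⟩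
  have hP' (t : ℝ) : HasDerivAt (fun t => aeval t P) (aeval t p) t := by
    simpa only [← hPp] using P.hasDerivAt_aeval t
  rw [iterPrim_succ_eq_sub_of_hasDerivAt one_pos hy hk (fun t ht => (hG t ht).add (hP' t))
    (hF.add (Polynomial.continuous_aeval p).continuousOn)]
  have hP1 : aeval (1 : ℝ) P = ((P.eval 1 : ℚ) : ℝ) := by
    rw [aeval_def, eval₂_at_one, eq_ratCast]
  simp only [Pi.add_apply, map_sub, aeval_C, hP1, hG1, eq_ratCast]
  push_cast
  ring

lemma exists_iterPrim_zpow_eq_of_lt {q k : ℕ} (hk : k < q) :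
    ∃ p ∈ ℚ[X]_k, ∀ y, 0 < y → iterPrim 1 k (fun t => t ^ (-(q : ℤ))) y =
      (((-1) ^ k / (q - 1).descFactorial k : ℚ) : ℝ) * y ^ ((k : ℤ) - q) + aeval y p := by
  induction k with
  | zero => exact ⟨0, zero_mem _, fun y _ => by simp [iterPrim]⟩
  | succ k ih =>
    obtain ⟨p, hp, hI⟩ := ih (by omega)
    have hcoeff : ((-1) ^ (k + 1) / (q - 1).descFactorial (k + 1) : ℚ) *
        (((k + 1 : ℕ) : ℤ) - q : ℤ) = (-1) ^ k / (q - 1).descFactorial k := by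
      obtain ⟨m, rfl⟩ := Nat.exists_eq_add_of_lt hk
      have hD : ((k + 1 + m + 1 - 1).descFactorial k : ℚ) ≠ 0 :=
        Nat.cast_ne_zero.2 (Nat.descFactorial_pos.2 (by omega)).ne'
      rw [Nat.descFactorial_succ, show k + 1 + m + 1 - 1 - k = m + 1 by omega]
      push_cast
      field_simp
      ring
    have hderiv (t : ℝ) (ht : 0 < t) : HasDerivAt
        (fun y => (((-1) ^ (k + 1) / (q - 1).descFactorial (k + 1) : ℚ) : ℝ) *
          y ^ (((k + 1 : ℕ) : ℤ) - q))
        ((((-1) ^ k / (q - 1).descFactorial k : ℚ) : ℝ) * t ^ ((k : ℤ) - q)) t := by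
      refine ((hasDerivAt_zpow _ t (Or.inl ht.ne')).const_mul _).congr_deriv ?_
      rw [← mul_assoc, ← hcoeff]
      push_cast
      ring_nf
    have hcont : ContinuousOn (fun t : ℝ => (((-1) ^ k / (q - 1).descFactorial k : ℚ) : ℝ) *
        t ^ ((k : ℤ) - q)) (Set.Ioi 0) :=
      continuousOn_const.mul ((continuousOn_zpow₀ _).mono fun _ ht => ne_of_gt ht)
    exact exists_iterPrim_succ_eq_add_aeval hp hI hderiv hcont (by rw [one_zpow, mul_one])

lemma hasDerivAt_pow_succ_mul_log {t : ℝ} (ht : t ≠ 0) (m : ℕ) :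
    HasDerivAt (fun t => t ^ (m + 1) * Real.log t)
      ((m + 1) * t ^ m * Real.log t + t ^ m) t := by
  refine ((hasDerivAt_pow (m + 1) t).mul (Real.hasDerivAt_log ht)).congr_deriv ?_
  field_simp
  push_cast
  ring

lemma exists_iterPrim_zpow_eq_log {q k : ℕ} (hq : 1 ≤ q) (hk : q ≤ k) :
    ∃ p ∈ ℚ[X]_k, ∀ y, 0 < y → iterPrim 1 k (fun t => t ^ (-(q : ℤ))) y =
      (((-1) ^ (q - 1) / ((q - 1).factorial * (k - q).factorial) : ℚ) : ℝ) *
        y ^ (k - q) * Real.log y + aeval y p := by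
  induction k, hk using Nat.le_induction with
  | base =>
    obtain ⟨p, hp, hI⟩ := exists_iterPrim_zpow_eq_of_lt (Nat.sub_lt hq one_pos)
    rw [Nat.descFactorial_self] at hI
    have hderiv (t : ℝ) (ht : 0 < t) : HasDerivAt
        (fun y => (((-1) ^ (q - 1) / ((q - 1).factorial * (q - q).factorial) : ℚ) : ℝ) *
          y ^ (q - q) * Real.log y)
        ((((-1) ^ (q - 1) / (q - 1).factorial : ℚ) : ℝ) * t ^ ((q - 1 : ℕ) - q : ℤ)) t := by
      have hexp : ((q - 1 : ℕ) : ℤ) - q = -1 := by omega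
      simp only [Nat.sub_self, pow_zero, mul_one, Nat.factorial_zero, Nat.cast_one, hexp,
        zpow_neg_one]
      exact (Real.hasDerivAt_log ht.ne').const_mul _
    have hcont : ContinuousOn (fun t : ℝ => (((-1) ^ (q - 1) / (q - 1).factorial : ℚ) : ℝ) *
        t ^ ((q - 1 : ℕ) - q : ℤ)) (Set.Ioi 0) :=
      continuousOn_const.mul ((continuousOn_zpow₀ _).mono fun _ ht => ne_of_gt ht)
    have := exists_iterPrim_succ_eq_add_aeval (c := 0) hp hI hderiv hcont (by simp)
    rwa [Nat.sub_add_cancel hq] at this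
  | succ k hk ih =>
    obtain ⟨p, hp, hI⟩ := ih
    set c : ℚ := (-1) ^ (q - 1) / ((q - 1).factorial * (k - q).factorial)
    set c' : ℚ := (-1) ^ (q - 1) / ((q - 1).factorial * (k + 1 - q).factorial)
    have hm : k + 1 - q = k - q + 1 := Nat.sub_add_comm hk
    have hc : c' * (k - q + 1 : ℕ) = c := by
      simp only [c, c', hm, Nat.factorial_succ]
      have : ((k - q).factorial : ℚ) ≠ 0 := Nat.cast_ne_zero.2 (Nat.factorial_ne_zero _)
      push_cast
      field_simp
    set F : ℝ → ℝ := fun t => c * t ^ (k - q) * Real.log t + (c' : ℝ) * t ^ (k - q)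
    have hp' : p - C c' * X ^ (k - q) ∈ ℚ[X]_k :=
      sub_mem hp (mem_degreeLT.2 ((degree_C_mul_X_pow_le _ _).trans_lt
        (by exact_mod_cast Nat.sub_lt (by omega) hq)))
    have hI' (t : ℝ) (ht : 0 < t) :
        iterPrim 1 k (fun t => t ^ (-(q : ℤ))) t = F t + aeval t (p - C c' * X ^ (k - q)) := by
      simp only [hI t ht, F, map_sub, map_mul, aeval_C, aeval_X_pow, eq_ratCast]
      ring
    have hderiv (t : ℝ) (ht : 0 < t) :
        HasDerivAt (fun y => (c' : ℝ) * y ^ (k + 1 - q) * Real.log y) (F t) t := by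
      simp only [hm, mul_assoc]
      refine ((hasDerivAt_pow_succ_mul_log ht.ne' (k - q)).const_mul (c' : ℝ)).congr_deriv ?_
      simp only [F, ← hc]
      push_cast
      ring
    have hcont : ContinuousOn F (Set.Ioi 0) := by
      fun_prop (disch := exact fun t ht => ne_of_gt ht)
    exact exists_iterPrim_succ_eq_add_aeval (c := 0) hp' hI' hderiv hcont (by simp)

lemma natDegree_lt_of_mem_degreeLT {R : Type*} [Semiring R] {n : ℕ} (hn : 0 < n) {p : R[X]}
    (hp : p ∈ R[X]_n) : p.natDegree < n := by
  rcases eq_or_ne p 0 with rfl | hp0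
  · simpa using hn
  · exact (natDegree_lt_iff_degree_lt hp0).2 (mem_degreeLT.1 hp)

lemma aeval_eq_sum_range_comp_one_sub {R S : Type*} [CommRing R] [CommRing S] [Algebra R S]
    {n : ℕ} (hn : 0 < n) {p : R[X]} (hp : p ∈ R[X]_n) (y : S) :
    aeval y p = ∑ i ∈ Finset.range n, (p.comp (1 - X)).coeff i • (1 - y) ^ i := by
  have hlin : (1 - X : R[X]).natDegree ≤ 1 :=
    (natDegree_sub_le _ _).trans (by simp [natDegree_X_le])
  have hdeg : (p.comp (1 - X)).natDegree < n :=
    natDegree_comp_le.trans_lt ((Nat.mul_le_mul_left _ hlin).trans_lt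
      (by simpa using natDegree_lt_of_mem_degreeLT hn hp))
  rw [← aeval_eq_sum_range' hdeg, aeval_comp]
  simp

/-- Lemma B.6, eq. (B.10): for integer `q` in the supercritical range `N ≥ q ≥ 1`, the
`N`-fold iterated primitive of `t^(−q)` based at `x₀` produces a logarithm with the stated
explicit coefficient, up to a polynomial in `1 − x/x₀` with rational coefficients
depending only on `N` and `q`. -/
theorem iterated_primitive_int_power_log (q N : ℕ) (hq : 1 ≤ q) (hqN : q ≤ N) :
    ∃ d : ℕ → ℚ, ∀ x₀ : ℝ, 0 < x₀ → ∀ x : ℝ, 0 < x →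
      (-1 : ℝ) ^ N * iterPrim x₀ N (fun t => t ^ (-(q : ℝ))) x =
        (-1 : ℝ) ^ (N + 1 - q) /
            ((Nat.factorial (q - 1) : ℝ) * (Nat.factorial (N - q) : ℝ)) *
            x ^ (N - q) * Real.log (x / x₀) -
          x₀ ^ (N - q) * ∑ i ∈ Finset.range N, (d i : ℝ) * (1 - x / x₀) ^ i := by
  obtain ⟨p, hp, hI⟩ := exists_iterPrim_zpow_eq_log hq hqN
  refine ⟨fun i => (-1) ^ (N + 1) * (p.comp (1 - X)).coeff i, fun x₀ hx₀ x hx => ?_⟩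
  have hrpow : (fun t : ℝ => t ^ (-(q : ℝ))) = fun t => t ^ (-(q : ℤ)) := by
    ext t; exact_mod_cast Real.rpow_intCast t (-(q : ℤ))
  have hpow : x₀ ^ ((N : ℤ) + -(q : ℤ)) = x₀ ^ (N - q) := by
    rw [← zpow_natCast, Nat.cast_sub hqN, sub_eq_add_neg]
  have hscale : x₀ ^ (N - q) * (x / x₀) ^ (N - q) = x ^ (N - q) := by
    rw [← mul_pow, mul_div_cancel₀ x hx₀.ne']
  have hsign : (-1 : ℝ) ^ N * (-1) ^ (q - 1) = (-1) ^ (N + 1 - q) := by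
    rw [← pow_add, show N + (q - 1) = N + 1 - q + 2 * (q - 1) by omega, pow_add, pow_mul]
    norm_num
  rw [hrpow, iterPrim_zpow_eq_rescale hx₀.ne', hI _ (div_pos hx hx₀),
    aeval_eq_sum_range_comp_one_sub (by omega) hp]
  simp only [Rat.smul_def, Rat.cast_mul, Rat.cast_pow, Rat.cast_neg, Rat.cast_one, mul_assoc,
    ← Finset.mul_sum]
  rw [hpow, ← hscale, ← hsign]
  push_cast
  ring
end
end

section
/- For all real numbers u < 0 < v, the improper integral ∫_{−∞}^{u} ( log(v−t) − log(−t) ) / (v−t) dt converges, and its value equals the convergent series Σ_{k=1}^{∞} (1/k²) · ( v/(v−u) )^k (note that 0 < v/(v−u) < 1); in other words it equals the dilogarithm Li₂( v/(v−u) ). (This is the exact identity established in the proof of Lemma B.4, via the substitution x′ = v/(v−t) and the identity Σ_{k≥1} x^k/k² = −∫₀ˣ log(1−x′)/x′ dx′; the lemma's conclusion ∫_{−∞}^{u} (log r − log r₀)/r du′ = 1 + O(r₀/r) follows from it.) -/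
open MeasureTheory

/-! The substitution `x = v / (v - t)` maps `(-∞, u]` onto `(0, b]`, `b = v / (v - u) < 1`, and
turns the integrand into `-log (1 - x) / x = ∑ₖ xᵏ / (k + 1)`; integrating term by term over
`(0, b]` gives `∑ₖ bᵏ⁺¹ / (k + 1)²`. -/

open Set Real

section Substitution

variable {E : Type*} [NormedAddCommGroup E] [NormedSpace ℝ E] {u v : ℝ}

lemma hasDerivAt_const_sub_const_div {x : ℝ} (v : ℝ) (hx : x ≠ 0) :
    HasDerivAt (fun x => v - v / x) (v / x ^ 2) x := by
  have h := ((hasDerivAt_inv hx).const_mul v).const_sub v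
  simp only [← div_eq_mul_inv, mul_neg, neg_neg] at h
  exact h

lemma injective_const_sub_const_div (hv : v ≠ 0) :
    Function.Injective fun x : ℝ => v - v / x := by
  intro x y h
  simpa [div_eq_mul_inv, hv] using h

lemma image_const_sub_const_div_Ioc (hv : 0 < v) (huv : u < v) :
    (fun x => v - v / x) '' Ioc 0 (v / (v - u)) = Iic u := by
  have hvu : 0 < v - u := sub_pos.2 huv
  ext t
  simp only [mem_image, mem_Ioc, mem_Iic]
  constructor
  · rintro ⟨x, ⟨hx0, hxb⟩, rfl⟩
    have : v - u ≤ v / x := by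
      simpa [div_div_cancel₀ hv.ne'] using div_le_div_of_nonneg_left hv.le hx0 hxb
    linarith
  · intro ht
    have hvt : 0 < v - t := by linarith
    refine ⟨v / (v - t), ⟨div_pos hv hvt, ?_⟩, ?_⟩
    · exact div_le_div_of_nonneg_left hv.le hvu (by linarith)
    · field_simp
      ring

lemma integrableOn_Iic_iff_integrableOn_comp_const_sub_const_div (hv : 0 < v) (huv : u < v)
    (f : ℝ → E) :
    IntegrableOn f (Iic u) ↔
      IntegrableOn (fun x => (v / x ^ 2) • f (v - v / x)) (Ioc 0 (v / (v - u))) := by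
  rw [← image_const_sub_const_div_Ioc hv huv, integrableOn_image_iff_integrableOn_abs_deriv_smul
    measurableSet_Ioc (fun x hx => (hasDerivAt_const_sub_const_div v hx.1.ne').hasDerivWithinAt)
    (injective_const_sub_const_div hv.ne').injOn]
  simp_rw [abs_of_nonneg (div_nonneg hv.le (sq_nonneg _))]

lemma integral_Iic_eq_integral_comp_const_sub_const_div (hv : 0 < v) (huv : u < v)
    (f : ℝ → E) :
    ∫ t in Iic u, f t = ∫ x in Ioc 0 (v / (v - u)), (v / x ^ 2) • f (v - v / x) := by
  rw [← image_const_sub_const_div_Ioc hv huv, integral_image_eq_integral_abs_deriv_smul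
    measurableSet_Ioc (fun x hx => (hasDerivAt_const_sub_const_div v hx.1.ne').hasDerivWithinAt)
    (injective_const_sub_const_div hv.ne').injOn]
  simp_rw [abs_of_nonneg (div_nonneg hv.le (sq_nonneg _))]

end Substitution

lemma div_sq_mul_log_sub_log_neg_div_comp_const_sub_const_div {v x : ℝ} (hv : 0 < v)
    (hx0 : 0 < x) (hx1 : x < 1) :
    v / x ^ 2 * ((log (v - (v - v / x)) - log (-(v - v / x))) / (v - (v - v / x))) =
      -log (1 - x) / x := by
  have h1x : 0 < 1 - x := by linarith
  have hneg : -(v - v / x) = v / x * (1 - x) := by field_simp; ring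
  rw [sub_sub_cancel, hneg, log_mul (by positivity) h1x.ne']
  field_simp
  ring

lemma hasSum_pow_div_succ_of_abs_lt_one {x : ℝ} (hx0 : x ≠ 0) (hx : |x| < 1) :
    HasSum (fun k : ℕ => x ^ k / ((k : ℝ) + 1)) (-log (1 - x) / x) := by
  have h := (hasSum_pow_div_log_of_abs_lt_one hx).div_const x
  have heq : (fun k : ℕ => x ^ (k + 1) / ((k : ℝ) + 1) / x) =
      fun k : ℕ => x ^ k / ((k : ℝ) + 1) := by
    ext k
    rw [pow_succ]
    field_simp
  rwa [heq] at h

lemma neg_log_one_sub_div_le {x : ℝ} (hx0 : 0 < x) (hx1 : x < 1) :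
    -log (1 - x) / x ≤ (1 - x)⁻¹ := by
  have h1x : 0 < 1 - x := by linarith
  have h := one_sub_inv_le_log_of_pos h1x
  rw [div_le_iff₀ hx0]
  have : (1 - x)⁻¹ * x = (1 - x)⁻¹ - 1 := by field_simp; ring
  linarith

lemma integrableOn_neg_log_one_sub_div {b : ℝ} (hb : b < 1) :
    IntegrableOn (fun x => -log (1 - x) / x) (Ioc 0 b) := by
  refine Measure.integrableOn_of_bounded (M := (1 - b)⁻¹) measure_Ioc_lt_top.ne
    ((measurable_const.sub measurable_id).log.neg.div measurable_id).aestronglyMeasurable ?_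
  filter_upwards [ae_restrict_mem measurableSet_Ioc] with x ⟨hx0, hxb⟩
  have hx1 : x < 1 := hxb.trans_lt hb
  have hlog : 0 ≤ -log (1 - x) := neg_nonneg.2 (log_nonpos (by linarith) (by linarith))
  rw [Real.norm_of_nonneg (div_nonneg hlog hx0.le)]
  exact (neg_log_one_sub_div_le hx0 hx1).trans (inv_anti₀ (by linarith) (by linarith))

lemma summable_one_div_succ_sq_mul_pow_succ {b : ℝ} (hb0 : 0 ≤ b) (hb1 : b < 1) :
    Summable fun k : ℕ => 1 / ((k : ℝ) + 1) ^ 2 * b ^ (k + 1) := by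
  refine .of_nonneg_of_le (fun k => by positivity) (fun k => ?_)
    ((summable_geometric_of_lt_one hb0 hb1).mul_left b)
  rw [pow_succ', mul_comm b]
  exact mul_le_of_le_one_left (by positivity) (div_le_one_of_le₀ (by nlinarith) (by positivity))

lemma hasSum_integral_neg_log_one_sub_div {b : ℝ} (hb0 : 0 ≤ b) (hb1 : b < 1) :
    HasSum (fun k : ℕ => 1 / ((k : ℝ) + 1) ^ 2 * b ^ (k + 1))
      (∫ x in Ioc 0 b, -log (1 - x) / x) := by
  have hterm (k : ℕ) : ∫ x in Ioc 0 b, x ^ k / ((k : ℝ) + 1) =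
      1 / ((k : ℝ) + 1) ^ 2 * b ^ (k + 1) := by
    rw [← intervalIntegral.integral_of_le hb0, intervalIntegral.integral_div, integral_pow]
    field_simp
    ring
  have hnorm (k : ℕ) : ∫ x in Ioc 0 b, ‖x ^ k / ((k : ℝ) + 1)‖ =
      1 / ((k : ℝ) + 1) ^ 2 * b ^ (k + 1) := by
    rw [← hterm k]
    refine setIntegral_congr_fun measurableSet_Ioc fun x hx => ?_
    exact Real.norm_of_nonneg (by have := hx.1; positivity)
  have hsum := hasSum_integral_of_summable_integral_norm
    (F := fun (k : ℕ) (x : ℝ) => x ^ k / ((k : ℝ) + 1))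
    (fun k => ((continuous_pow k).div_const _).integrableOn_Ioc)
    ((summable_one_div_succ_sq_mul_pow_succ hb0 hb1).congr fun k => (hnorm k).symm)
  have hpointwise : ∫ x in Ioc 0 b, -log (1 - x) / x =
      ∫ x in Ioc 0 b, ∑' k : ℕ, x ^ k / ((k : ℝ) + 1) :=
    setIntegral_congr_fun measurableSet_Ioc fun x hx =>
      (hasSum_pow_div_succ_of_abs_lt_one hx.1.ne'
        (by rw [abs_of_pos hx.1]; linarith [hx.2])).tsum_eq.symm
  simpa only [hpointwise, hterm] using hsum

/-- The exact identity established in the proof of Lemma B.4: for `u < 0 < v`, the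
improper integral `∫_{−∞}^{u} (log(v−t) − log(−t))/(v−t) dt` converges and equals the
convergent series `Σ_{k=1}^{∞} (1/k²) (v/(v−u))^k`, i.e. the dilogarithm
`Li₂(v/(v−u))`. -/
theorem dilogarithm_integral_identity (u v : ℝ) (hu : u < 0) (hv : 0 < v) :
    IntegrableOn (fun t => (Real.log (v - t) - Real.log (-t)) / (v - t)) (Set.Iic u) volume ∧
      Summable (fun k : ℕ => 1 / ((k : ℝ) + 1) ^ 2 * (v / (v - u)) ^ (k + 1)) ∧
      ∫ t in Set.Iic u, (Real.log (v - t) - Real.log (-t)) / (v - t) =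
        ∑' k : ℕ, 1 / ((k : ℝ) + 1) ^ 2 * (v / (v - u)) ^ (k + 1) := by
  have huv : u < v := hu.trans hv
  have hvu : 0 < v - u := sub_pos.2 huv
  have hb1 : v / (v - u) < 1 := (div_lt_one hvu).2 (by linarith)
  have hsubst : EqOn
      (fun x => (v / x ^ 2) • ((log (v - (v - v / x)) - log (-(v - v / x))) / (v - (v - v / x))))
      (fun x => -log (1 - x) / x) (Ioc 0 (v / (v - u))) := fun x ⟨hx0, hxb⟩ =>
    div_sq_mul_log_sub_log_neg_div_comp_const_sub_const_div hv hx0 (hxb.trans_lt hb1)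
  have hseries := hasSum_integral_neg_log_one_sub_div (div_pos hv hvu).le hb1
  refine ⟨?_, hseries.summable, ?_⟩
  · rw [integrableOn_Iic_iff_integrableOn_comp_const_sub_const_div hv huv]
    exact (integrableOn_neg_log_one_sub_div hb1).congr_fun hsubst.symm measurableSet_Ioc
  · rw [integral_Iic_eq_integral_comp_const_sub_const_div hv huv,
      setIntegral_congr_fun measurableSet_Ioc hsubst, hseries.tsum_eq]
end
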